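/- arXiv:1501.00678 — 7 statements merged into one kernel-verified Lean document; each statement's English description precedes it below -/
import Mathlib

section
/- For an odd prime p, the automorphism group of the extraspecial group of order p^3 and exponent p has order (p^2-1)(p^2-p)p^2. -/
/-!
Since `|G| = p ^ 3`, every proper subgroup of `G` and the quotient `G ⧸ Z(G)` have order
dividing `p ^ 2`, hence are abelian. So commutators are central, and any two non-commuting
elements `x, y` generate `G`. As `G` has exponent `p`, `(a, b, c) ↦ y ^ b * x ^ a * ⁅x, y⁆ ^ c`
is then an isomorphism from the Heisenberg group over `𝔽_p` onto `G`. Consequently an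
automorphism is the same as the choice of the images of one non-commuting pair, that is, a
non-commuting pair. In the Heisenberg group `(a, b, c)` and `(a', b', c')` commute iff `(a, b)`
and `(a', b')` are linearly dependent, so there are `|GL₂(𝔽_p)| * p ^ 2` such pairs.
-/

open Subgroup
open scoped commutatorElement

lemma Nat.Prime.dvd_pow_of_dvd_pow_succ_of_ne {p d n : ℕ} (hp : p.Prime) (h : d ∣ p ^ (n + 1))
    (hne : d ≠ p ^ (n + 1)) : d ∣ p ^ n := by
  obtain ⟨m, hm, rfl⟩ := (Nat.dvd_prime_pow hp).1 h
  exact pow_dvd_pow p (Nat.le_of_lt_succ (hm.lt_of_ne (by rintro rfl; exact hne rfl)))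

lemma linearIndependent_fin_two_iff {K : Type*} [Field K] (s : Fin 2 → Fin 2 → K) :
    LinearIndependent K s ↔ s 0 0 * s 1 1 ≠ s 0 1 * s 1 0 := by
  rw [← sub_ne_zero, ← Matrix.det_fin_two_of, ← isUnit_iff_ne_zero]
  exact Matrix.linearIndependent_rows_iff_isUnit.trans (Matrix.isUnit_iff_isUnit_det _)

section GroupLemmas

variable {G : Type*} [Group G]

lemma semiconjBy_pow_pow_of_commutatorElement_mem_center {x y : G} (hz : ⁅x, y⁆ ∈ center G)
    (i j : ℕ) : SemiconjBy (x ^ i) (y ^ j) (y ^ j * ⁅x, y⁆ ^ (i * j)) := by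
  have hzc (g : G) : Commute g ⁅x, y⁆ := mem_center_iff.1 hz g
  have h : SemiconjBy x y (y * ⁅x, y⁆) := by
    rw [SemiconjBy, mem_center_iff.1 hz y, commutatorElement_def]
    group
  have hi : SemiconjBy (x ^ i) y (y * ⁅x, y⁆ ^ i) := by
    induction i with
    | zero => simp
    | succ i ih =>
      rw [pow_succ, pow_succ, ← mul_assoc]
      exact (ih.mul_right (hzc _)).mul_left h
  simpa [((hzc y).pow_right i).mul_pow, pow_mul] using hi.pow_right j

variable {p : ℕ} {g : G}

lemma pow_zmod_val_one (hg : g ^ p = 1) : g ^ (1 : ZMod p).val = g := by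
  rw [ZMod.val_one_eq_one_mod, ← pow_eq_pow_mod _ hg, pow_one]

lemma pow_zmod_val_add [NeZero p] (hg : g ^ p = 1) (a b : ZMod p) :
    g ^ (a + b).val = g ^ a.val * g ^ b.val := by
  rw [ZMod.val_add, ← pow_eq_pow_mod _ hg, pow_add]

lemma pow_zmod_val_mul (hg : g ^ p = 1) (a b : ZMod p) :
    g ^ (a * b).val = g ^ (a.val * b.val) := by
  rw [ZMod.val_mul, ← pow_eq_pow_mod _ hg]

end GroupLemmas

lemma MulEquiv.card_notCommute_eq {G H : Type*} [Group G] [Group H] (e : G ≃* H) :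
    Nat.card {q : G × G // ¬Commute q.1 q.2} = Nat.card {q : H × H // ¬Commute q.1 q.2} :=
  Nat.card_congr <| (e.toEquiv.prodCongr e.toEquiv).subtypeEquiv fun _ ↦
    (commute_map_iff e.injective).not.symm

section PrimeCube

variable {p : ℕ} [hp : Fact p.Prime]

lemma isMulCommutative_of_card_dvd_prime_sq {K : Type*} [Group K] (h : Nat.card K ∣ p ^ 2) :
    IsMulCommutative K := by
  obtain ⟨m, hm, hK⟩ := (Nat.dvd_prime_pow hp.out).1 h
  interval_cases m
  · have : Subsingleton K := (Nat.card_eq_one_iff_unique.1 (by simpa using hK)).1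
    exact isMulCommutative_iff.2 fun _ _ ↦ Subsingleton.elim _ _
  · have : IsCyclic K := isCyclic_of_prime_card (by simpa using hK)
    infer_instance
  · exact IsPGroup.isMulCommutative_of_card_eq_prime_sq hK

variable {G : Type*} [Group G]

lemma closure_pair_eq_top_of_card_eq_prime_pow_three (hG : Nat.card G = p ^ 3) {x y : G}
    (hxy : ¬Commute x y) : closure {x, y} = ⊤ := by
  have : Finite G := Nat.finite_of_card_ne_zero (by simp [hG, hp.out.ne_zero])
  by_contra hne
  have hH : Nat.card (closure {x, y}) ∣ p ^ 2 := hp.out.dvd_pow_of_dvd_pow_succ_of_ne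
    (hG ▸ card_subgroup_dvd_card _) (hG ▸ mt (card_eq_iff_eq_top _).1 hne)
  have := isMulCommutative_of_card_dvd_prime_sq hH
  exact hxy (congrArg Subtype.val (isMulCommutative_iff.1 this
    ⟨x, subset_closure (by simp)⟩ ⟨y, subset_closure (by simp)⟩))

lemma commutatorElement_mem_center_of_card_eq_prime_pow_three (hG : Nat.card G = p ^ 3)
    (x y : G) : ⁅x, y⁆ ∈ center G := by
  have : Finite G := Nat.finite_of_card_ne_zero (by simp [hG, hp.out.ne_zero])
  have : Nontrivial G := Finite.one_lt_card_iff_nontrivial.1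
    (hG ▸ Nat.one_lt_pow (by norm_num) hp.out.one_lt)
  have hZ : center G ≠ ⊥ := (nontrivial_iff_ne_bot _).1 (IsPGroup.of_card hG).center_nontrivial
  have hQ : Nat.card (G ⧸ center G) ∣ p ^ 2 := by
    refine hp.out.dvd_pow_of_dvd_pow_succ_of_ne (hG ▸ index_dvd_card _) fun h ↦ hZ ?_
    have hZG := card_mul_index (center G)
    rw [index_eq_card, h, hG] at hZG
    exact card_eq_one.1 (by simpa [hp.out.ne_zero] using hZG)
  have := isMulCommutative_of_card_dvd_prime_sq hQ
  rw [← QuotientGroup.eq_one_iff, ← QuotientGroup.mk'_apply, map_commutatorElement,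
    commutatorElement_eq_one_iff_mul_comm]
  exact isMulCommutative_iff.1 this _ _

end PrimeCube

/-- `⟨a, b, c⟩` stands for the unitriangular matrix `[[1, a, c], [0, 1, b], [0, 0, 1]]`. -/
@[ext]
structure Heisenberg (p : ℕ) where
  a : ZMod p
  b : ZMod p
  c : ZMod p

namespace Heisenberg

variable {p : ℕ}

instance : Mul (Heisenberg p) := ⟨fun u v ↦ ⟨u.a + v.a, u.b + v.b, u.c + v.c + u.a * v.b⟩⟩
instance : One (Heisenberg p) := ⟨⟨0, 0, 0⟩⟩
instance : Inv (Heisenberg p) := ⟨fun u ↦ ⟨-u.a, -u.b, -u.c + u.a * u.b⟩⟩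

lemma mul_def (u v : Heisenberg p) :
    u * v = ⟨u.a + v.a, u.b + v.b, u.c + v.c + u.a * v.b⟩ := rfl
lemma one_def : (1 : Heisenberg p) = ⟨0, 0, 0⟩ := rfl
lemma inv_def (u : Heisenberg p) : u⁻¹ = ⟨-u.a, -u.b, -u.c + u.a * u.b⟩ := rfl

instance : Group (Heisenberg p) where
  mul_assoc u v w := by ext <;> simp only [mul_def] <;> ring
  one_mul u := by ext <;> simp only [mul_def, one_def] <;> ring
  mul_one u := by ext <;> simp only [mul_def, one_def] <;> ring
  inv_mul_cancel u := by ext <;> simp only [mul_def, one_def, inv_def] <;> ring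

lemma commute_iff {u v : Heisenberg p} : Commute u v ↔ u.a * v.b = u.b * v.a := by
  rw [Commute, SemiconjBy, mul_def, mul_def, Heisenberg.mk.injEq]
  simp only [add_comm u.a, add_comm u.b, true_and]
  constructor <;> intro h <;> linear_combination h

def equivProd : Heisenberg p ≃ ZMod p × ZMod p × ZMod p where
  toFun u := (u.a, u.b, u.c)
  invFun t := ⟨t.1, t.2.1, t.2.2⟩

instance [NeZero p] : Finite (Heisenberg p) := .of_equiv _ equivProd.symm

lemma card : Nat.card (Heisenberg p) = p ^ 3 := by
  rw [Nat.card_congr equivProd, Nat.card_prod, Nat.card_prod, Nat.card_zmod]; ring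

def notCommuteEquiv [Fact p.Prime] :
    {q : Heisenberg p × Heisenberg p // ¬Commute q.1 q.2} ≃
      {s : Fin 2 → Fin 2 → ZMod p // LinearIndependent (ZMod p) s} × (ZMod p × ZMod p) where
  toFun q := (⟨![![q.1.1.a, q.1.1.b], ![q.1.2.a, q.1.2.b]], by
    simpa [linearIndependent_fin_two_iff, commute_iff] using q.2⟩, (q.1.1.c, q.1.2.c))
  invFun r := ⟨(⟨r.1.1 0 0, r.1.1 0 1, r.2.1⟩, ⟨r.1.1 1 0, r.1.1 1 1, r.2.2⟩), by
    simpa [linearIndependent_fin_two_iff, commute_iff] using r.1.2⟩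
  left_inv q := rfl
  right_inv r := by
    ext i j
    · fin_cases i <;> fin_cases j <;> rfl
    all_goals rfl

lemma card_notCommute [Fact p.Prime] :
    Nat.card {q : Heisenberg p × Heisenberg p // ¬Commute q.1 q.2} =
      (p ^ 2 - 1) * (p ^ 2 - p) * p ^ 2 := by
  rw [Nat.card_congr notCommuteEquiv, Nat.card_prod, card_linearIndependent (by simp),
    Nat.card_prod, Nat.card_zmod, Module.finrank_fin_fun, ZMod.card, Fin.prod_univ_two]
  simp [sq]

variable {G : Type*} [Group G] {x y : G} [NeZero p] (hexp : ∀ g : G, g ^ p = 1)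
  (hz : ⁅x, y⁆ ∈ center G)

/-- For odd `p`, `Heisenberg p` is the free nilpotent group of class 2 and exponent `p` on
`⟨1, 0, 0⟩` and `⟨0, 1, 0⟩`; this is its universal property. -/
def lift : Heisenberg p →* G where
  toFun u := y ^ u.b.val * x ^ u.a.val * ⁅x, y⁆ ^ u.c.val
  map_one' := by simp [one_def]
  map_mul' u v := by
    have hzc (n : ℕ) (g : G) : Commute (⁅x, y⁆ ^ n) g :=
      (mem_center_iff.1 (pow_mem hz n) g).symm
    have hab := (semiconjBy_pow_pow_of_commutatorElement_mem_center hz u.a.val v.b.val).eq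
    simp only [mul_def]
    rw [show u.c + v.c + u.a * v.b = u.a * v.b + u.c + v.c by ring]
    simp only [pow_zmod_val_add (hexp _), pow_zmod_val_mul (hexp _), mul_assoc]
    rw [(hzc u.c.val (y ^ v.b.val)).left_comm, (hzc u.c.val (x ^ v.a.val)).left_comm,
      ← mul_assoc (x ^ u.a.val) (y ^ v.b.val), hab]
    simp only [mul_assoc]
    rw [(hzc _ (x ^ u.a.val)).left_comm, (hzc _ (x ^ v.a.val)).left_comm]

lemma lift_mk_one_zero_zero : lift hexp hz ⟨1, 0, 0⟩ = x := by
  simp [lift, pow_zmod_val_one (hexp x)]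

lemma lift_mk_zero_one_zero : lift hexp hz ⟨0, 1, 0⟩ = y := by
  simp [lift, pow_zmod_val_one (hexp y)]

lemma lift_bijective [Fact p.Prime] (hG : Nat.card G = p ^ 3) (hxy : ¬Commute x y) :
    Function.Bijective (lift hexp hz) := by
  have hsurj : (lift hexp hz).range = ⊤ := by
    rw [eq_top_iff, ← closure_pair_eq_top_of_card_eq_prime_pow_three hG hxy, closure_le]
    rintro _ (rfl | rfl)
    exacts [⟨_, lift_mk_one_zero_zero hexp hz⟩, ⟨_, lift_mk_zero_one_zero hexp hz⟩]
  exact (Nat.bijective_iff_surjective_and_card _).2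
    ⟨MonoidHom.range_eq_top.1 hsurj, card.trans hG.symm⟩

end Heisenberg

section Automorphisms

variable {p : ℕ} [Fact p.Prime] {G : Type*} [Group G]

noncomputable def mulEquivHeisenberg (hG : Nat.card G = p ^ 3) (hexp : ∀ g : G, g ^ p = 1)
    {x y : G} (hxy : ¬Commute x y) : Heisenberg p ≃* G :=
  MulEquiv.ofBijective _ (Heisenberg.lift_bijective hexp
    (commutatorElement_mem_center_of_card_eq_prime_pow_three hG x y) hG hxy)

lemma mulEquivHeisenberg_mk_one_zero_zero (hG : Nat.card G = p ^ 3) (hexp : ∀ g : G, g ^ p = 1)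
    {x y : G} (hxy : ¬Commute x y) : mulEquivHeisenberg hG hexp hxy ⟨1, 0, 0⟩ = x :=
  Heisenberg.lift_mk_one_zero_zero hexp
    (commutatorElement_mem_center_of_card_eq_prime_pow_three hG x y)

lemma mulEquivHeisenberg_mk_zero_one_zero (hG : Nat.card G = p ^ 3) (hexp : ∀ g : G, g ^ p = 1)
    {x y : G} (hxy : ¬Commute x y) : mulEquivHeisenberg hG hexp hxy ⟨0, 1, 0⟩ = y :=
  Heisenberg.lift_mk_zero_one_zero hexp
    (commutatorElement_mem_center_of_card_eq_prime_pow_three hG x y)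

lemma card_mulAut_eq_card_notCommute (hG : Nat.card G = p ^ 3) (hexp : ∀ g : G, g ^ p = 1)
    {x y : G} (hxy : ¬Commute x y) :
    Nat.card (MulAut G) = Nat.card {q : G × G // ¬Commute q.1 q.2} := by
  refine Nat.card_eq_of_bijective
    (fun φ ↦ ⟨(φ x, φ y), (commute_map_iff φ.injective).not.2 hxy⟩)
    ⟨fun φ ψ h ↦ ?_, fun ⟨⟨x', y'⟩, hxy'⟩ ↦ ?_⟩
  · have := MonoidHom.eq_of_eqOn_dense (closure_pair_eq_top_of_card_eq_prime_pow_three hG hxy)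
      (f := φ.toMonoidHom) (g := ψ.toMonoidHom) ?_
    · exact MulEquiv.ext (DFunLike.congr_fun this :)
    rintro _ (rfl | rfl)
    exacts [congrArg (·.1.1) h, congrArg (·.1.2) h]
  · let e := mulEquivHeisenberg hG hexp hxy
    have hx : e.symm x = ⟨1, 0, 0⟩ :=
      e.symm_apply_eq.2 (mulEquivHeisenberg_mk_one_zero_zero hG hexp hxy).symm
    have hy : e.symm y = ⟨0, 1, 0⟩ :=
      e.symm_apply_eq.2 (mulEquivHeisenberg_mk_zero_one_zero hG hexp hxy).symm
    refine ⟨e.symm.trans (mulEquivHeisenberg hG hexp hxy'), Subtype.ext ?_⟩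
    simp only [MulEquiv.trans_apply, hx, hy, mulEquivHeisenberg_mk_one_zero_zero,
      mulEquivHeisenberg_mk_zero_one_zero]

end Automorphisms

theorem stmt_1_general (p : ℕ) [Fact p.Prime]
    (G : Type*) [Group G]
    (hcard : Nat.card G = p ^ 3)
    (hexp : Monoid.exponent G = p)
    (hnab : ¬ ∀ a b : G, a * b = b * a) :
    (Nat.card (MulAut G) : ℤ) = (p ^ 2 - 1) * (p ^ 2 - p) * p ^ 2 := by
  have hpow (g : G) : g ^ p = 1 := hexp ▸ Monoid.pow_exponent_eq_one g
  obtain ⟨x, y, hxy⟩ : ∃ x y : G, ¬Commute x y := by simpa [commute_iff_eq] using hnab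
  rw [card_mulAut_eq_card_notCommute hcard hpow hxy,
    ← (mulEquivHeisenberg hcard hpow hxy).card_notCommute_eq, Heisenberg.card_notCommute]
  have hp := (Fact.out : p.Prime).pos
  push_cast [Nat.cast_sub (Nat.one_le_pow 2 p hp), Nat.cast_sub (Nat.le_self_pow two_ne_zero p)]
  ring

/-- The automorphism group of the extraspecial group of order p^3 and exponent p
has order (p^2-1)(p^2-p)p^2. -/
theorem stmt_1 (p : ℕ) [Fact p.Prime] (hp : Odd p)
    (G : Type*) [Group G]
    (hcard : Nat.card G = p ^ 3)
    (hexp : Monoid.exponent G = p)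
    (hnab : ¬ ∀ a b : G, a * b = b * a) :
    (Nat.card (MulAut G) : ℤ) = (p ^ 2 - 1) * (p ^ 2 - p) * p ^ 2 :=
  stmt_1_general p G hcard hexp hnab
end

section
/- For an odd prime p, the extraspecial group of order p^5 and exponent p has automorphism group of order (p^5-p)(p^5-p^4)(p^3-p)p^2. -/
/-!
Any such group `G` is isomorphic to the model `Hei p`, the set `𝔽_p⁴ × 𝔽_p` with a product whose
commutator `⁅g, h⁆ = (0, ω(g.v, h.v))` is given by the standard symplectic form `ω` on `𝔽_p⁴`.
A quadruple `a, b, c, d` in a group `K` with `⁅a, b⁆ = ⁅c, d⁆` central, `a, b` commuting with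
`c, d` and all of order dividing `p` defines a homomorphism `Hei p →* K` sending the standard
generators to `a, b, c, d`; it is injective as soon as `⁅a, b⁆ ≠ 1`, because `ω` is nondegenerate.
Such a quadruple exists in `G`: take a noncommuting pair `A, B`. Their common centralizer has index
at most `|Z(G)|² = p²`, so it is not central, and as every element of `G` is `B ^ i * A ^ j` times
an element of it, it contains a noncommuting pair `C, D`; replacing `D` by a power of it achieves
`⁅C, D⁆ = ⁅A, B⁆`.

Automorphisms of `Hei p` thus correspond to such quadruples in `Hei p`, i.e. to vectors with
`ω(a, b) ≠ 0`, `c, d ⊥ a, b` and `ω(c, d) = ω(a, b)`, together with four arbitrary central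
coordinates. Counting the vectors one at a time, as fibres of surjective linear maps, gives
`(p⁴ - 1)(p⁴ - p³)(p² - 1)p`, and the central coordinates contribute `p⁴`.
-/

open scoped commutatorElement

section CentralCommutator

variable {G : Type*} [Group G] {x y : G}

theorem commutatorElement_zpow_right (h : Commute ⁅x, y⁆ y) (n : ℤ) :
    ⁅x, y ^ n⁆ = ⁅x, y⁆ ^ n := by
  have hconj : x * y * x⁻¹ = ⁅x, y⁆ * y := by simp [commutatorElement_def]
  rw [commutatorElement_def, ← conj_zpow, hconj, h.mul_zpow, mul_inv_cancel_right]

theorem commutatorElement_zpow_left (h : Commute ⁅x, y⁆ x) (n : ℤ) :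
    ⁅x ^ n, y⁆ = ⁅x, y⁆ ^ n := by
  have h' : Commute ⁅y, x⁆ x := by
    rw [← commutatorElement_inv]
    exact h.inv_left
  rw [← commutatorElement_inv, commutatorElement_zpow_right h', ← commutatorElement_inv, inv_zpow,
    inv_inv]

theorem commutatorElement_zpow_zpow (hx : Commute ⁅x, y⁆ x) (hy : Commute ⁅x, y⁆ y) (m n : ℤ) :
    ⁅x ^ m, y ^ n⁆ = ⁅x, y⁆ ^ (m * n) := by
  have hmy : Commute ⁅x ^ m, y⁆ y := by
    rw [commutatorElement_zpow_left hx]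
    exact hy.zpow_left m
  rw [commutatorElement_zpow_right hmy, commutatorElement_zpow_left hx, zpow_mul]

theorem zpow_mul_zpow_mul_zpow_mul_zpow (hx : Commute ⁅x, y⁆ x) (hy : Commute ⁅x, y⁆ y)
    (a b c d : ℤ) :
    x ^ a * y ^ b * (x ^ c * y ^ d) = ⁅x, y⁆ ^ (-(b * c)) * (x ^ (a + c) * y ^ (b + d)) := by
  have hswap : y ^ b * x ^ c = ⁅x, y⁆ ^ (-(b * c)) * (x ^ c * y ^ b) := by
    have hyx : ⁅x, y⁆ ^ (-(b * c)) = ⁅y ^ b, x ^ c⁆ := by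
      rw [← commutatorElement_inv (x ^ c), commutatorElement_zpow_zpow hx hy, zpow_neg, mul_comm]
    rw [hyx, commutatorElement_def]
    group
  calc x ^ a * y ^ b * (x ^ c * y ^ d) = x ^ a * (y ^ b * x ^ c) * y ^ d := by group
    _ = ⁅x, y⁆ ^ (-(b * c)) * (x ^ (a + c) * y ^ (b + d)) := by
      rw [hswap, zpow_add, zpow_add, ((hx.zpow_left _).zpow_right a).symm.left_comm]
      group

theorem zpow_eq_zpow_of_intCast_eq {p : ℕ} (hx : x ^ p = 1) {m n : ℤ}
    (h : (m : ZMod p) = n) : x ^ m = x ^ n := by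
  rw [zpow_eq_zpow_iff_modEq]
  exact Int.ModEq.of_dvd (Int.natCast_dvd_natCast.2 (orderOf_dvd_of_pow_eq_one hx))
    ((ZMod.intCast_eq_intCast_iff _ _ _).1 h)

theorem zpow_eq_one_iff_intCast_eq_zero {p : ℕ} [Fact p.Prime] (hx : x ^ p = 1) (hx1 : x ≠ 1)
    {n : ℤ} : x ^ n = 1 ↔ (n : ZMod p) = 0 := by
  rw [← orderOf_dvd_iff_zpow_eq_one, orderOf_eq_prime hx hx1, ZMod.intCast_zmod_eq_zero_iff_dvd]

end CentralCommutator

theorem Subgroup.zpowers_eq_of_card_eq_prime {G : Type*} [Group G] {p : ℕ} [Fact p.Prime]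
    {H : Subgroup G} [Finite H] (hH : Nat.card H = p) {x : G} (hx : x ∈ H) (hxp : x ^ p = 1)
    (hx1 : x ≠ 1) : Subgroup.zpowers x = H :=
  Subgroup.eq_of_le_of_card_ge (Subgroup.zpowers_le.2 hx)
    (by rw [hH, Nat.card_zpowers, orderOf_eq_prime hxp hx1])

section NilpotencyClassTwo

variable {G : Type*} [Group G]

def commutatorRightHom (hG : ∀ x y : G, ⁅x, y⁆ ∈ Subgroup.center G) (g : G) :
    G →* Subgroup.center G where
  toFun x := ⟨⁅g, x⁆, hG g x⟩
  map_one' := Subtype.ext (commutatorElement_one_right g)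
  map_mul' x y := Subtype.ext <| show ⁅g, x * y⁆ = ⁅g, x⁆ * ⁅g, y⁆ by
    rw [commutatorElement_mul_right_eq_mul_conj, mul_assoc ⁅g, x⁆,
      Subgroup.mem_center_iff.1 (hG g y) x, ← mul_assoc, mul_inv_cancel_right]

@[simp]
theorem coe_commutatorRightHom (hG : ∀ x y : G, ⁅x, y⁆ ∈ Subgroup.center G) (g x : G) :
    (commutatorRightHom hG g x : G) = ⁅g, x⁆ :=
  rfl

theorem exists_commute_commute_commutatorElement_ne_one [Finite G]
    (hG : ∀ x y : G, ⁅x, y⁆ ∈ Subgroup.center G) {A B : G}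
    (hZ : Subgroup.center G = Subgroup.zpowers ⁅A, B⁆)
    (hcard : Nat.card (Subgroup.center G) ^ 3 < Nat.card G) :
    ∃ C D : G, Commute A C ∧ Commute B C ∧ Commute A D ∧ Commute B D ∧ ⁅C, D⁆ ≠ 1 := by
  set Φ := (commutatorRightHom hG A).prod (commutatorRightHom hG B)
  have hker (x : G) : x ∈ Φ.ker ↔ Commute A x ∧ Commute B x := by
    simp [Φ, MonoidHom.mem_ker, commutatorRightHom, Subtype.ext_iff,
      commutatorElement_eq_one_iff_commute]
  have hdecomp (y : G) : ∃ i j : ℤ, (B ^ i * A ^ j)⁻¹ * y ∈ Φ.ker := by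
    obtain ⟨i, hi⟩ := Subgroup.mem_zpowers_iff.1 (hZ ▸ hG A y)
    obtain ⟨j, hj⟩ := Subgroup.mem_zpowers_iff.1 (hZ ▸ hG B y)
    refine ⟨i, -j, ?_⟩
    rw [MonoidHom.mem_ker, map_mul, map_inv, inv_mul_eq_one]
    refine Prod.ext (Subtype.ext ?_) (Subtype.ext ?_)
    · simp [Φ, ← hi]
    · simp [Φ, ← hj]
      rw [← commutatorElement_inv A B, inv_zpow, inv_inv]
  -- `|G| = |ker Φ| * |range Φ| ≤ |ker Φ| * |Z(G)| ^ 2`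
  have hnot_le : ¬ Φ.ker ≤ Subgroup.center G := by
    intro hle
    have hrange : Nat.card Φ.range ≤ Nat.card (Subgroup.center G) ^ 2 := by
      rw [sq, ← Nat.card_prod]
      exact Subgroup.card_le_card_group _
    have h1 := Subgroup.card_le_of_le hle
    have h2 := Φ.ker.card_mul_index
    rw [Subgroup.index_ker] at h2
    nlinarith
  obtain ⟨C, hC, hCZ⟩ := Set.not_subset.1 hnot_le
  obtain ⟨y, hy⟩ : ∃ y, ¬ Commute C y := by
    by_contra! h
    exact hCZ (Subgroup.mem_center_iff.2 fun y => (h y).eq.symm)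
  obtain ⟨i, j, hD⟩ := hdecomp y
  refine ⟨C, _, ((hker C).1 hC).1, ((hker C).1 hC).2, ((hker _).1 hD).1, ((hker _).1 hD).2, ?_⟩
  intro hCD
  have hCw : Commute C (B ^ i * A ^ j) :=
    ((((hker C).1 hC).2.zpow_left i).mul_left (((hker C).1 hC).1.zpow_left j)).symm
  have hCy := hCw.mul_right (commutatorElement_eq_one_iff_commute.1 hCD)
  rw [mul_inv_cancel_left] at hCy
  exact hy hCy

end NilpotencyClassTwo

theorem AddMonoidHom.card_fiber_mul_card {V W : Type*} [AddGroup V] [AddGroup W] [Finite V]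
    {f : V →+ W} (hf : Function.Surjective f) (y : W) :
    Nat.card {x // f x = y} * Nat.card W = Nat.card V := by
  rw [← f.ker.card_mul_index, AddSubgroup.index_ker, f.range_eq_top.2 hf, AddSubgroup.card_top]
  exact congrArg (· * _) (Nat.card_congr (f.fiberEquivKerOfSurjective hf y))

theorem card_subtype_prod_eq_mul {α β : Type*} [Finite α] [Finite β] {P : α → Prop}
    {Q : α → β → Prop} {m : ℕ} (h : ∀ a, P a → Nat.card {b // Q a b} = m) :
    Nat.card {x : α × β // P x.1 ∧ Q x.1 x.2} = Nat.card {a // P a} * m := by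
  let e : {x : α × β // P x.1 ∧ Q x.1 x.2} ≃ Σ a : {a // P a}, {b // Q a b} :=
    { toFun x := ⟨⟨x.1.1, x.2.1⟩, ⟨x.1.2, x.2.2⟩⟩
      invFun y := ⟨(y.1, y.2), y.1.2, y.2.2⟩ }
  have := Fintype.ofFinite {a // P a}
  rw [Nat.card_congr e, Nat.card_sigma, Finset.sum_congr rfl fun a _ => h a.1 a.2,
    Finset.sum_const, Finset.card_univ, smul_eq_mul, Nat.card_eq_fintype_card]

namespace LinearMap

variable {K V : Type*} [Field K] [AddCommGroup V] [Module K V] {ω : V →ₗ[K] V →ₗ[K] K}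

theorem surjective_apply_of_separatingLeft (hsep : ω.SeparatingLeft) {a : V} (ha : a ≠ 0) :
    Function.Surjective (ω a) := by
  obtain ⟨y, hy⟩ : ∃ y, ω a y ≠ 0 := by
    by_contra! h
    exact ha (hsep a h)
  exact fun t => ⟨(t / ω a y) • y, by simp [hy]⟩

theorem IsAlt.apply_inv_smul_smul_sub_smul (hω : ω.IsAlt) {a b : V} (hab : ω a b ≠ 0) (u v : K) :
    ω a ((ω a b)⁻¹ • (u • b - v • a)) = u ∧ ω b ((ω a b)⁻¹ • (u • b - v • a)) = v := by
  simp only [map_smul, map_sub, smul_eq_mul, hω.self_eq_zero, ← hω.neg a b]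
  constructor <;> field_simp <;> ring

theorem IsAlt.surjective_prod (hω : ω.IsAlt) {a b : V} (hab : ω a b ≠ 0) :
    Function.Surjective ((ω a).prod (ω b)) := fun ⟨u, v⟩ =>
  have h := hω.apply_inv_smul_smul_sub_smul hab u v
  ⟨_, Prod.ext h.1 h.2⟩

theorem IsAlt.surjective_prod_prod (hω : ω.IsAlt) (hsep : ω.SeparatingLeft) {a b c : V}
    (hab : ω a b ≠ 0) (hc : c ≠ 0) (hac : ω a c = 0) (hbc : ω b c = 0) :
    Function.Surjective ((ω a).prod ((ω b).prod (ω c))) := by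
  have hca : ω c a = 0 := hω.eq_iff.1 hac
  have hcb : ω c b = 0 := hω.eq_iff.1 hbc
  set w : K → K → V := fun u v => (ω a b)⁻¹ • (u • b - v • a)
  have hw u v : ω a (w u v) = u ∧ ω b (w u v) = v ∧ ω c (w u v) = 0 := by
    refine ⟨(hω.apply_inv_smul_smul_sub_smul hab u v).1,
      (hω.apply_inv_smul_smul_sub_smul hab u v).2, ?_⟩
    simp [w, hca, hcb]
  -- project a vector not orthogonal to `c` onto the orthogonal complement of `a` and `b`
  obtain ⟨y, hy⟩ := surjective_apply_of_separatingLeft hsep hc 1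
  set y' := y - w (ω a y) (ω b y)
  have hay' : ω a y' = 0 := by simp [y', (hw _ _).1]
  have hby' : ω b y' = 0 := by simp [y', (hw _ _).2.1]
  have hcy' : ω c y' = 1 := by simp [y', (hw _ _).2.2, hy]
  rintro ⟨u, v, t⟩
  refine ⟨w u v + t • y', ?_⟩
  simp [(hw u v).1, (hw u v).2.1, (hw u v).2.2, hay', hby', hcy']

end LinearMap

section ConformalFrames

variable {K V : Type*} [Field K] [Finite K] [AddCommGroup V] [Module K V] [Finite V]
  {ω : V →ₗ[K] V →ₗ[K] K}

/-- In dimension 4, these are the images of a symplectic basis under the symplectic similitudes. -/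
def IsConformalFrame (ω : V →ₗ[K] V →ₗ[K] K) (a b c d : V) : Prop :=
  ω a b ≠ 0 ∧ ω a c = 0 ∧ ω b c = 0 ∧ ω a d = 0 ∧ ω b d = 0 ∧ ω c d = ω a b

variable (hV : Nat.card V = Nat.card K ^ 4)
include hV

theorem card_apply_ne_zero (hsep : ω.SeparatingLeft) {a : V} (ha : a ≠ 0) :
    Nat.card {b // ω a b ≠ 0} = Nat.card K ^ 4 - Nat.card K ^ 3 := by
  have hfiber := AddMonoidHom.card_fiber_mul_card
    (f := (ω a).toAddMonoidHom) (LinearMap.surjective_apply_of_separatingLeft hsep ha) 0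
  have hsplit := Set.ncard_add_ncard_compl {b | ω a b = 0}
  have hq : 0 < Nat.card K := Nat.card_pos
  have hker : Nat.card {b // ω a b = 0} = Nat.card K ^ 3 :=
    Nat.eq_of_mul_eq_mul_right hq (by rw [← pow_succ, ← hV]; exact hfiber)
  change Nat.card {b // ω a b = 0} + Nat.card {b // ω a b ≠ 0} = _ at hsplit
  omega

theorem card_orthogonal_ne_zero (hω : ω.IsAlt) {a b : V} (hab : ω a b ≠ 0) :
    Nat.card {c // (ω a c = 0 ∧ ω b c = 0) ∧ c ≠ 0} = Nat.card K ^ 2 - 1 := by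
  have hfiber := AddMonoidHom.card_fiber_mul_card
    (f := ((ω a).prod (ω b)).toAddMonoidHom) (hω.surjective_prod hab) 0
  simp only [LinearMap.toAddMonoidHom_coe, LinearMap.coe_prod, Function.prod_apply,
    Prod.mk_eq_zero, Nat.card_prod, hV, ← pow_two] at hfiber
  have hker : Nat.card {c // ω a c = 0 ∧ ω b c = 0} = Nat.card K ^ 2 :=
    Nat.eq_of_mul_eq_mul_right (pow_pos Nat.card_pos 2) (by rw [hfiber, ← pow_add])
  change ({c | ω a c = 0 ∧ ω b c = 0} \ {0}).ncard = _
  rw [Set.ncard_sdiff_singleton_of_mem (by simp)]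
  exact congrArg (· - 1) hker

theorem card_fiber_prod_prod (hω : ω.IsAlt) (hsep : ω.SeparatingLeft) {a b c : V}
    (hab : ω a b ≠ 0) (hc : c ≠ 0) (hac : ω a c = 0) (hbc : ω b c = 0) (t : K) :
    Nat.card {d // ω a d = 0 ∧ ω b d = 0 ∧ ω c d = t} = Nat.card K := by
  have hfiber := AddMonoidHom.card_fiber_mul_card
    (f := ((ω a).prod ((ω b).prod (ω c))).toAddMonoidHom)
    (hω.surjective_prod_prod hsep hab hc hac hbc) (0, 0, t)
  simp only [LinearMap.toAddMonoidHom_coe, LinearMap.coe_prod, Function.prod_apply,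
    Prod.mk.injEq, Nat.card_prod, hV, ← pow_two, ← pow_succ'] at hfiber
  exact Nat.eq_of_mul_eq_mul_right (pow_pos Nat.card_pos 3) (by rw [hfiber, ← pow_succ'])

theorem card_pairs_orthogonal_conformal (hω : ω.IsAlt) (hsep : ω.SeparatingLeft) {a b : V}
    (hab : ω a b ≠ 0) :
    Nat.card {cd : V × V // ω a cd.1 = 0 ∧ ω b cd.1 = 0 ∧ ω a cd.2 = 0 ∧ ω b cd.2 = 0 ∧
      ω cd.1 cd.2 = ω a b} = (Nat.card K ^ 2 - 1) * Nat.card K := by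
  have hc {c d : V} (h : ω c d = ω a b) : c ≠ 0 := by
    rintro rfl
    exact hab (by simpa using h.symm)
  calc _ = Nat.card {cd : V × V // ((ω a cd.1 = 0 ∧ ω b cd.1 = 0) ∧ cd.1 ≠ 0) ∧
          ω a cd.2 = 0 ∧ ω b cd.2 = 0 ∧ ω cd.1 cd.2 = ω a b} :=
        Nat.card_congr <| Equiv.subtypeEquivRight fun _ =>
          ⟨fun ⟨h1, h2, h3, h4, h5⟩ => ⟨⟨⟨h1, h2⟩, hc h5⟩, h3, h4, h5⟩,
            fun ⟨⟨⟨h1, h2⟩, _⟩, h3, h4, h5⟩ => ⟨h1, h2, h3, h4, h5⟩⟩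
    _ = _ := by
      rw [card_subtype_prod_eq_mul (P := fun c => (ω a c = 0 ∧ ω b c = 0) ∧ c ≠ 0)
        fun c hc => card_fiber_prod_prod hV hω hsep hab hc.2 hc.1.1 hc.1.2 _,
        card_orthogonal_ne_zero hV hω hab]

theorem card_conformalFrames (hω : ω.IsAlt) (hsep : ω.SeparatingLeft) :
    Nat.card {x : (V × V) × (V × V) // IsConformalFrame ω x.1.1 x.1.2 x.2.1 x.2.2} =
      (Nat.card K ^ 4 - 1) * (Nat.card K ^ 4 - Nat.card K ^ 3) *
        ((Nat.card K ^ 2 - 1) * Nat.card K) := by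
  have ha {a b : V} (h : ω a b ≠ 0) : a ≠ 0 := by
    rintro rfl
    exact h (by simp)
  have hne : Nat.card {a : V // a ≠ 0} = Nat.card K ^ 4 - 1 := by
    rw [← hV]
    exact (Set.ncard_compl {(0 : V)}).trans (by rw [Set.ncard_singleton])
  calc _ = Nat.card {ab : V × V // ω ab.1 ab.2 ≠ 0} * ((Nat.card K ^ 2 - 1) * Nat.card K) :=
        card_subtype_prod_eq_mul fun _ hab => card_pairs_orthogonal_conformal hV hω hsep hab
    _ = Nat.card {ab : V × V // ab.1 ≠ 0 ∧ ω ab.1 ab.2 ≠ 0} *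
          ((Nat.card K ^ 2 - 1) * Nat.card K) := by
        rw [Nat.card_congr (Equiv.subtypeEquivRight fun _ => (and_iff_right_of_imp ha).symm)]
    _ = _ := by
        rw [card_subtype_prod_eq_mul (P := fun a : V => a ≠ 0)
          fun _ ha => card_apply_ne_zero hV hsep ha, hne]

end ConformalFrames

def symplecticForm (p : ℕ) : (Fin 4 → ZMod p) →ₗ[ZMod p] (Fin 4 → ZMod p) →ₗ[ZMod p] ZMod p :=
  LinearMap.mk₂ (ZMod p) (fun v w => v 0 * w 1 - v 1 * w 0 + v 2 * w 3 - v 3 * w 2)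
    (fun _ _ _ => by simp only [Pi.add_apply]; ring)
    (fun _ _ _ => by simp only [Pi.smul_apply, smul_eq_mul]; ring)
    (fun _ _ _ => by simp only [Pi.add_apply]; ring)
    (fun _ _ _ => by simp only [Pi.smul_apply, smul_eq_mul]; ring)

theorem symplecticForm_apply {p : ℕ} (v w : Fin 4 → ZMod p) :
    symplecticForm p v w = v 0 * w 1 - v 1 * w 0 + v 2 * w 3 - v 3 * w 2 := rfl

theorem symplecticForm_isAlt (p : ℕ) : (symplecticForm p).IsAlt := fun v => by
  rw [symplecticForm_apply]; ring

theorem symplecticForm_separatingLeft (p : ℕ) : (symplecticForm p).SeparatingLeft := by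
  intro v hv
  have h0 := hv (Pi.single 1 1)
  have h1 := hv (Pi.single 0 1)
  have h2 := hv (Pi.single 3 1)
  have h3 := hv (Pi.single 2 1)
  simp [symplecticForm_apply] at h0 h1 h2 h3
  ext i; fin_cases i <;> simp [h0, h1, h2, h3]

@[ext]
structure Hei (p : ℕ) where
  v : Fin 4 → ZMod p
  z : ZMod p

namespace Hei

variable {p : ℕ}

-- The cocycle `-(v 1 * w 0 + v 3 * w 2)` antisymmetrizes to `symplecticForm p v w`.
instance : Mul (Hei p) := ⟨fun g h => ⟨g.v + h.v, g.z + h.z - (g.v 1 * h.v 0 + g.v 3 * h.v 2)⟩⟩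
instance : One (Hei p) := ⟨⟨0, 0⟩⟩
instance : Inv (Hei p) := ⟨fun g => ⟨-g.v, -g.z - (g.v 1 * g.v 0 + g.v 3 * g.v 2)⟩⟩

@[simp] theorem mul_v (g h : Hei p) : (g * h).v = g.v + h.v := rfl
@[simp] theorem mul_z (g h : Hei p) : (g * h).z = g.z + h.z - (g.v 1 * h.v 0 + g.v 3 * h.v 2) :=
  rfl
@[simp] theorem one_v : (1 : Hei p).v = 0 := rfl
@[simp] theorem one_z : (1 : Hei p).z = 0 := rfl
@[simp] theorem inv_v (g : Hei p) : g⁻¹.v = -g.v := rfl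
@[simp] theorem inv_z (g : Hei p) : g⁻¹.z = -g.z - (g.v 1 * g.v 0 + g.v 3 * g.v 2) := rfl

instance : Group (Hei p) where
  mul_assoc _ _ _ := by ext <;> simp <;> ring
  one_mul _ := by ext <;> simp
  mul_one _ := by ext <;> simp
  inv_mul_cancel _ := by
    ext <;> simp
    ring

theorem commutatorElement_eq (g h : Hei p) : ⁅g, h⁆ = ⟨0, symplecticForm p g.v h.v⟩ := by
  ext <;> simp [commutatorElement_def, symplecticForm_apply]
  ring

theorem commutatorElement_mem_center (g h : Hei p) : ⁅g, h⁆ ∈ Subgroup.center (Hei p) := by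
  rw [Subgroup.mem_center_iff]
  intro k
  ext <;> simp [commutatorElement_eq]
  ring

theorem commutatorElement_eq_one_iff (g h : Hei p) :
    ⁅g, h⁆ = 1 ↔ symplecticForm p g.v h.v = 0 := by
  simp [commutatorElement_eq, Hei.ext_iff]

theorem commutatorElement_eq_iff (g h g' h' : Hei p) :
    ⁅g, h⁆ = ⁅g', h'⁆ ↔ symplecticForm p g.v h.v = symplecticForm p g'.v h'.v := by
  simp [commutatorElement_eq, Hei.ext_iff]

def equivProd : Hei p ≃ (Fin 4 → ZMod p) × ZMod p where
  toFun g := (g.v, g.z)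
  invFun x := ⟨x.1, x.2⟩

theorem card_eq [NeZero p] : Nat.card (Hei p) = p ^ 5 := by
  rw [Nat.card_congr equivProd, Nat.card_prod, Nat.card_fun, Nat.card_zmod]; simp; ring

instance [NeZero p] : Finite (Hei p) := .of_equiv _ equivProd.symm

end Hei

/-- The relations satisfied by the generators `Hei.single 0, …, Hei.single 3` of `Hei p`. -/
@[ext]
structure HeiFrame (p : ℕ) (K : Type*) [Group K] where
  a : K
  b : K
  c : K
  d : K
  commutator_mem_center : ⁅a, b⁆ ∈ Subgroup.center K
  commutator_c_d : ⁅c, d⁆ = ⁅a, b⁆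
  commute_a_c : Commute a c
  commute_a_d : Commute a d
  commute_b_c : Commute b c
  commute_b_d : Commute b d
  pow_a : a ^ p = 1
  pow_b : b ^ p = 1
  pow_c : c ^ p = 1
  pow_d : d ^ p = 1

namespace HeiFrame

variable {p : ℕ} {K L : Type*} [Group K] [Group L] (F : HeiFrame p K)

theorem commute_commutator (g : K) : Commute ⁅F.a, F.b⁆ g :=
  (Subgroup.mem_center_iff.mp F.commutator_mem_center g).symm

def word (a b c d e : ℤ) : K := F.a ^ a * F.b ^ b * (F.c ^ c * F.d ^ d) * ⁅F.a, F.b⁆ ^ e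

theorem word_mul (a b c d e a' b' c' d' e' : ℤ) :
    F.word a b c d e * F.word a' b' c' d' e' =
      F.word (a + a') (b + b') (c + c') (d + d') (e + e' - (b * a' + d * c')) := by
  have hz (n : ℤ) (g : K) : Commute (⁅F.a, F.b⁆ ^ n) g := (F.commute_commutator g).zpow_left n
  have hPQ : Commute (F.c ^ c * F.d ^ d) (F.a ^ a' * F.b ^ b') :=
    (((F.commute_a_c.zpow_zpow a' c).mul_left (F.commute_b_c.zpow_zpow b' c)).mul_right
      ((F.commute_a_d.zpow_zpow a' d).mul_left (F.commute_b_d.zpow_zpow b' d))).symm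
  have hP := zpow_mul_zpow_mul_zpow_mul_zpow (F.commute_commutator F.a)
    (F.commute_commutator F.b) a b a' b'
  have hQ := zpow_mul_zpow_mul_zpow_mul_zpow (F.commutator_c_d ▸ F.commute_commutator F.c)
    (F.commutator_c_d ▸ F.commute_commutator F.d) c d c' d'
  rw [F.commutator_c_d] at hQ
  calc F.word a b c d e * F.word a' b' c' d' e'
      = F.a ^ a * F.b ^ b * (F.a ^ a' * F.b ^ b') * (F.c ^ c * F.d ^ d * (F.c ^ c' * F.d ^ d'))
          * (⁅F.a, F.b⁆ ^ e * ⁅F.a, F.b⁆ ^ e') := by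
        rw [word, word, (hz e _).mul_mul_mul_comm, hPQ.mul_mul_mul_comm]
    _ = _ := by
      rw [hP, hQ, (hz _ (F.a ^ _ * _)).eq, (hz _ (F.c ^ _ * _)).eq]
      simp only [word, mul_assoc, (hz (-(b * a')) _).left_comm, ← zpow_add]
      rw [show -(b * a') + -(d * c') + (e + e') = e + e' - (b * a' + d * c') by ring]

theorem commutator_pow : ⁅F.a, F.b⁆ ^ p = 1 := by
  rw [← zpow_natCast, ← commutatorElement_zpow_right (F.commute_commutator F.b), zpow_natCast,
    F.pow_b, commutatorElement_one_right]

theorem word_congr {a b c d e a' b' c' d' e' : ℤ} (ha : (a : ZMod p) = a') (hb : (b : ZMod p) = b')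
    (hc : (c : ZMod p) = c') (hd : (d : ZMod p) = d') (he : (e : ZMod p) = e') :
    F.word a b c d e = F.word a' b' c' d' e' := by
  rw [word, word, zpow_eq_zpow_of_intCast_eq F.pow_a ha, zpow_eq_zpow_of_intCast_eq F.pow_b hb,
    zpow_eq_zpow_of_intCast_eq F.pow_c hc, zpow_eq_zpow_of_intCast_eq F.pow_d hd,
    zpow_eq_zpow_of_intCast_eq F.commutator_pow he]

def map (e : K ≃* L) : HeiFrame p L where
  a := e F.a
  b := e F.b
  c := e F.c
  d := e F.d
  commutator_mem_center := by
    rw [← map_commutatorElement, Subgroup.mem_center_iff]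
    intro g
    obtain ⟨g, rfl⟩ := e.surjective g
    rw [← map_mul, ← map_mul, (F.commute_commutator g).eq]
  commutator_c_d := by rw [← map_commutatorElement, ← map_commutatorElement, F.commutator_c_d]
  commute_a_c := F.commute_a_c.map e
  commute_a_d := F.commute_a_d.map e
  commute_b_c := F.commute_b_c.map e
  commute_b_d := F.commute_b_d.map e
  pow_a := by rw [← map_pow, F.pow_a, map_one]
  pow_b := by rw [← map_pow, F.pow_b, map_one]
  pow_c := by rw [← map_pow, F.pow_c, map_one]
  pow_d := by rw [← map_pow, F.pow_d, map_one]

variable [Fact p.Prime]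

def lift : Hei p →* K where
  toFun g := F.word (g.v 0).val (g.v 1).val (g.v 2).val (g.v 3).val g.z.val
  map_one' := by simp [word]
  map_mul' g h := by
    rw [word_mul]
    apply word_congr <;> simp

theorem lift_central (s : ZMod p) : F.lift ⟨0, s⟩ = ⁅F.a, F.b⁆ ^ (s.val : ℤ) := by
  simp [lift, word]

theorem lift_injective (h : ⁅F.a, F.b⁆ ≠ 1) : Function.Injective F.lift := by
  have hz {s : ZMod p} (hs : F.lift ⟨0, s⟩ = 1) : s = 0 := by
    rw [lift_central, zpow_eq_one_iff_intCast_eq_zero F.commutator_pow h] at hs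
    simpa using hs
  rw [injective_iff_map_eq_one]
  intro g hg
  have hv : g.v = 0 := symplecticForm_separatingLeft p _ fun w => hz <| by
    rw [← Hei.commutatorElement_eq g ⟨w, 0⟩, map_commutatorElement, hg, commutatorElement_one_left]
  have hgz : g = ⟨0, g.z⟩ := Hei.ext hv rfl
  exact hgz.trans (congrArg _ (hz (hgz ▸ hg)))

noncomputable def liftEquiv (h : ⁅F.a, F.b⁆ ≠ 1) (hK : Nat.card K = p ^ 5) : Hei p ≃* K :=
  have : Finite K := Nat.finite_of_card_ne_zero (hK ▸ pow_ne_zero 5 (Fact.out : p.Prime).ne_zero)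
  MulEquiv.ofBijective F.lift <|
    (Nat.bijective_iff_injective_and_card _).2 ⟨F.lift_injective h, by rw [Hei.card_eq, hK]⟩

@[simp]
theorem liftEquiv_apply (h : ⁅F.a, F.b⁆ ≠ 1) (hK : Nat.card K = p ^ 5) (g : Hei p) :
    F.liftEquiv h hK g = F.lift g :=
  rfl

theorem lift_map (e : K ≃* L) (g : Hei p) : (F.map e).lift g = e (F.lift g) := by
  simp [lift, word, map, map_commutatorElement]

end HeiFrame

namespace Hei

variable {p : ℕ}

def single (i : Fin 4) : Hei p := ⟨Pi.single i 1, 0⟩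

theorem pow_mk {v : Fin 4 → ZMod p} (hv : v 1 * v 0 + v 3 * v 2 = 0) (s : ZMod p) (n : ℕ) :
    (⟨v, s⟩ : Hei p) ^ n = ⟨n • v, n • s⟩ := by
  induction n with
  | zero => ext <;> simp
  | succ n ih =>
    rw [pow_succ, ih]
    ext
    · simp [add_smul]
    · simp [add_smul]
      linear_combination (n : ZMod p) * hv

theorem commute_iff (g h : Hei p) : Commute g h ↔ symplecticForm p g.v h.v = 0 :=
  commutatorElement_eq_one_iff_commute.symm.trans (commutatorElement_eq_one_iff g h)

def stdFrame (hexp : ∀ g : Hei p, g ^ p = 1) : HeiFrame p (Hei p) where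
  a := single 0
  b := single 1
  c := single 2
  d := single 3
  commutator_mem_center := commutatorElement_mem_center _ _
  commutator_c_d := (commutatorElement_eq_iff _ _ _ _).2 (by simp [single, symplecticForm_apply])
  commute_a_c := (commute_iff _ _).2 (by simp [single, symplecticForm_apply])
  commute_a_d := (commute_iff _ _).2 (by simp [single, symplecticForm_apply])
  commute_b_c := (commute_iff _ _).2 (by simp [single, symplecticForm_apply])
  commute_b_d := (commute_iff _ _).2 (by simp [single, symplecticForm_apply])
  pow_a := hexp _
  pow_b := hexp _
  pow_c := hexp _
  pow_d := hexp _

end Hei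

namespace HeiFrame

variable {p : ℕ} [Fact p.Prime] {K : Type*} [Group K] (F : HeiFrame p K)

@[simp]
theorem lift_single_zero : F.lift (Hei.single 0) = F.a := by
  simp [lift, word, Hei.single, -ZMod.natCast_val, ZMod.val_one]

@[simp]
theorem lift_single_one : F.lift (Hei.single 1) = F.b := by
  simp [lift, word, Hei.single, -ZMod.natCast_val, ZMod.val_one]

@[simp]
theorem lift_single_two : F.lift (Hei.single 2) = F.c := by
  simp [lift, word, Hei.single, -ZMod.natCast_val, ZMod.val_one]

@[simp]
theorem lift_single_three : F.lift (Hei.single 3) = F.d := by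
  simp [lift, word, Hei.single, -ZMod.natCast_val, ZMod.val_one]

theorem lift_stdFrame (hexp : ∀ g : Hei p, g ^ p = 1) (g : Hei p) :
    (Hei.stdFrame hexp).lift g = g := by
  simp only [lift, word, Hei.stdFrame, MonoidHom.coe_mk, OneHom.coe_mk, zpow_natCast, Hei.single]
  rw [Hei.commutatorElement_eq]
  simp (disch := simp) only [Hei.pow_mk]
  ext i
  · fin_cases i <;> simp [symplecticForm_apply, -nsmul_eq_mul]
  · simp [symplecticForm_apply]

end HeiFrame

theorem exists_heiFrame {p : ℕ} [Fact p.Prime] {G : Type*} [Group G]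
    (hcard : Nat.card G = p ^ 5) (hexp : Monoid.exponent G = p)
    (hextra : commutator G = Subgroup.center G) (hcenter : Nat.card (Subgroup.center G) = p) :
    ∃ F : HeiFrame p G, ⁅F.a, F.b⁆ ≠ 1 := by
  have hp := (Fact.out : p.Prime).one_lt
  have : Finite G := Nat.finite_of_card_ne_zero (by rw [hcard]; positivity)
  have hpow (g : G) : g ^ p = 1 := hexp ▸ Monoid.pow_exponent_eq_one g
  have hG (x y : G) : ⁅x, y⁆ ∈ Subgroup.center G :=
    hextra ▸ Subgroup.commutator_mem_commutator (Subgroup.mem_top x) (Subgroup.mem_top y)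
  have hzpowers {w : G} (hw : w ∈ Subgroup.center G) (hw1 : w ≠ 1) :
      Subgroup.zpowers w = Subgroup.center G :=
    Subgroup.zpowers_eq_of_card_eq_prime hcenter hw (hpow w) hw1
  obtain ⟨A, B, hAB⟩ : ∃ A B : G, ⁅A, B⁆ ≠ 1 := by
    by_contra! h
    have htop : Subgroup.center G = ⊤ := eq_top_iff.2 fun x _ =>
      Subgroup.mem_center_iff.2 fun y => commutatorElement_eq_one_iff_mul_comm.1 (h y x)
    rw [htop, Subgroup.card_top, hcard] at hcenter
    exact absurd hcenter (ne_of_gt (by simpa using Nat.pow_lt_pow_right hp (by norm_num : 1 < 5)))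
  obtain ⟨C, D, hAC, hBC, hAD, hBD, hCD⟩ :=
    exists_commute_commute_commutatorElement_ne_one hG (hzpowers (hG A B) hAB).symm
      (by rw [hcenter, hcard]; exact Nat.pow_lt_pow_right hp (by norm_num))
  obtain ⟨s, hs⟩ := Subgroup.mem_zpowers_iff.1 ((hzpowers (hG C D) hCD).symm ▸ hG A B)
  have hCDs : ⁅C, D ^ s⁆ = ⁅A, B⁆ := by
    rw [commutatorElement_zpow_right ((Subgroup.mem_center_iff.1 (hG C D) D).symm), hs]
  exact ⟨⟨A, B, C, D ^ s, hG A B, hCDs, hAC, hAD.zpow_right s, hBC, hBD.zpow_right s,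
    hpow A, hpow B, hpow C, hpow _⟩, hAB⟩

namespace Hei

variable {p : ℕ} [Fact p.Prime]

theorem commutatorElement_single_zero_one_ne_one :
    ⁅(single 0 : Hei p), (single 1 : Hei p)⁆ ≠ 1 := by
  simp [commutatorElement_eq_one_iff, single, symplecticForm_apply]

noncomputable def mulAutEquivFrames (hexp : ∀ g : Hei p, g ^ p = 1) :
    MulAut (Hei p) ≃ {F : HeiFrame p (Hei p) // ⁅F.a, F.b⁆ ≠ 1} where
  toFun φ := ⟨(stdFrame hexp).map φ, by
    simpa [HeiFrame.map, stdFrame, ← map_commutatorElement] using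
      commutatorElement_single_zero_one_ne_one⟩
  invFun F := F.1.liftEquiv F.2 card_eq
  left_inv φ := MulEquiv.ext fun g => by simp [HeiFrame.lift_map, HeiFrame.lift_stdFrame]
  right_inv F := Subtype.ext <| HeiFrame.ext (by simp [HeiFrame.map, stdFrame])
    (by simp [HeiFrame.map, stdFrame]) (by simp [HeiFrame.map, stdFrame])
    (by simp [HeiFrame.map, stdFrame])

def framesEquiv (hexp : ∀ g : Hei p, g ^ p = 1) :
    {F : HeiFrame p (Hei p) // ⁅F.a, F.b⁆ ≠ 1} ≃
      {x : ((Fin 4 → ZMod p) × (Fin 4 → ZMod p)) × ((Fin 4 → ZMod p) × (Fin 4 → ZMod p)) //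
        IsConformalFrame (symplecticForm p) x.1.1 x.1.2 x.2.1 x.2.2} ×
      (ZMod p × ZMod p × ZMod p × ZMod p) where
  toFun F := (⟨((F.1.a.v, F.1.b.v), (F.1.c.v, F.1.d.v)),
      (commutatorElement_eq_one_iff _ _).not.1 F.2, (commute_iff _ _).1 F.1.commute_a_c,
      (commute_iff _ _).1 F.1.commute_b_c, (commute_iff _ _).1 F.1.commute_a_d,
      (commute_iff _ _).1 F.1.commute_b_d, (commutatorElement_eq_iff _ _ _ _).1 F.1.commutator_c_d⟩,
    (F.1.a.z, F.1.b.z, F.1.c.z, F.1.d.z))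
  invFun y :=
    ⟨{ a := ⟨y.1.1.1.1, y.2.1⟩
       b := ⟨y.1.1.1.2, y.2.2.1⟩
       c := ⟨y.1.1.2.1, y.2.2.2.1⟩
       d := ⟨y.1.1.2.2, y.2.2.2.2⟩
       commutator_mem_center := commutatorElement_mem_center _ _
       commutator_c_d := (commutatorElement_eq_iff _ _ _ _).2 y.1.2.2.2.2.2.2
       commute_a_c := (commute_iff _ _).2 y.1.2.2.1
       commute_a_d := (commute_iff _ _).2 y.1.2.2.2.2.1
       commute_b_c := (commute_iff _ _).2 y.1.2.2.2.1
       commute_b_d := (commute_iff _ _).2 y.1.2.2.2.2.2.1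
       pow_a := hexp _
       pow_b := hexp _
       pow_c := hexp _
       pow_d := hexp _ },
      (commutatorElement_eq_one_iff _ _).not.2 y.1.2.1⟩
  left_inv _ := rfl
  right_inv _ := rfl

theorem card_mulAut (hexp : ∀ g : Hei p, g ^ p = 1) :
    Nat.card (MulAut (Hei p)) = (p ^ 4 - 1) * (p ^ 4 - p ^ 3) * ((p ^ 2 - 1) * p) * p ^ 4 := by
  have hV : Nat.card (Fin 4 → ZMod p) = Nat.card (ZMod p) ^ 4 := by simp
  rw [Nat.card_congr ((mulAutEquivFrames hexp).trans (framesEquiv hexp)), Nat.card_prod,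
    card_conformalFrames hV (symplecticForm_isAlt p) (symplecticForm_separatingLeft p)]
  simp only [Nat.card_prod, Nat.card_zmod]
  ring

end Hei

theorem stmt_5_general (p : ℕ) [Fact p.Prime]
    (G : Type*) [Group G]
    (hcard : Nat.card G = p ^ 5)
    (hexp : Monoid.exponent G = p)
    (hextra : commutator G = Subgroup.center G)
    (hcenter : Nat.card (Subgroup.center G) = p) :
    (Nat.card (MulAut G) : ℤ) = (p ^ 5 - p) * (p ^ 5 - p ^ 4) * (p ^ 3 - p) * p ^ 2 := by
  obtain ⟨F, hF⟩ := exists_heiFrame hcard hexp hextra hcenter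
  let e : Hei p ≃* G := F.liftEquiv hF hcard
  have hHei (g : Hei p) : g ^ p = 1 := by
    simpa [Monoid.exponent_eq_of_mulEquiv e, hexp] using Monoid.pow_exponent_eq_one g
  have hp : 1 ≤ p := (Fact.out : p.Prime).one_lt.le
  rw [← Nat.card_congr (MulAut.congr e).toEquiv, Hei.card_mulAut hHei]
  push_cast [Nat.cast_sub (Nat.one_le_pow _ _ hp),
    Nat.cast_sub (Nat.pow_le_pow_right hp (by norm_num : 3 ≤ 4))]
  ring

/-- The extraspecial group of order p^5 and exponent p has automorphism group of
order (p^5-p)(p^5-p^4)(p^3-p)p^2. -/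
theorem stmt_5 (p : ℕ) [Fact p.Prime] (hp : Odd p)
    (G : Type*) [Group G]
    (hcard : Nat.card G = p ^ 5)
    (hexp : Monoid.exponent G = p)
    (hextra : commutator G = Subgroup.center G)
    (hcenter : Nat.card (Subgroup.center G) = p) :
    (Nat.card (MulAut G) : ℤ) = (p ^ 5 - p) * (p ^ 5 - p ^ 4) * (p ^ 3 - p) * p ^ 2 :=
  stmt_5_general p G hcard hexp hextra hcenter
end

section
/- Let p be an odd prime and G a finite group of nilpotency class 2 and exponent p with G/G' elementary abelian of rank k. If α is an automorphism of G and g_1,...,g_k are arbitrary elements of G', then there exists an automorphism β of G with a_iβ = (a_iα)g_i for each i, where a_1,...,a_k are generators of G. Consequently |Aut(G)| = |B|·|G'|^k, where B is the image of Aut(G) in Aut(G/G'). -/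
/-!
Because `G'` is central, `x ↦ α x * f x` is an endomorphism of `G` for every homomorphism
`f : G → G'`, and it is an automorphism as soon as `f` vanishes on the characteristic subgroup
`G'`. Such `f` factor through `G/G'`, an `𝔽_p`-vector space of dimension `k` in which the images
of the `a_i` span, hence form a basis; so `f` can take arbitrary values `g_i` on the `a_i`.
With `α = 1` this shows that `β ↦ (a_i⁻¹ * β a_i)_i` is a bijection from the kernel of
`Aut G → Aut (G/G')` onto `G'^k`.
-/

section ElementaryAbelian

open Subgroup

variable {p : ℕ} [Fact p.Prime] {A B ι : Type*} [CommGroup A] [CommGroup B] [Fintype ι]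

theorem exists_monoidHom_apply_eq_of_card_eq_pow (hA : ∀ x : A, x ^ p = 1)
    (hB : ∀ y : B, y ^ p = 1) {b : ι → A} (hb : closure (Set.range b) = ⊤)
    (hcard : Nat.card A = p ^ Fintype.card ι) (w : ι → B) :
    ∃ f : A →* B, ∀ i, f (b i) = w i := by
  let := AddCommGroup.zmodModule (n := p) (G := Additive A) fun x ↦
    congrArg Additive.ofMul (hA x.toMul)
  let := AddCommGroup.zmodModule (n := p) (G := Additive B) fun y ↦
    congrArg Additive.ofMul (hB y.toMul)
  have : Finite A := Nat.finite_of_card_ne_zero <| by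
    simp [hcard, (Fact.out : p.Prime).ne_zero]
  have hspan : ⊤ ≤ Submodule.span (ZMod p) (Set.range (Additive.ofMul ∘ b)) := by
    intro x _
    have hx : x ∈ AddSubgroup.closure (Additive.toMul ⁻¹' Set.range b) := by
      rw [← toAddSubgroup_closure, hb]; trivial
    refine (AddSubgroup.closure_le (Submodule.span (ZMod p) _).toAddSubgroup).mpr ?_ hx
    rintro y ⟨i, hi⟩
    exact Submodule.subset_span ⟨i, by simp [hi]⟩
  have hfinrank : Fintype.card ι = Module.finrank (ZMod p) (Additive A) := by
    have := Module.natCard_eq_pow_finrank (K := ZMod p) (V := Additive A)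
    rw [Nat.card_zmod] at this
    exact Nat.pow_right_injective (Fact.out : p.Prime).two_le (hcard.symm.trans this)
  let basis := basisOfTopLeSpanOfCardEqFinrank _ hspan hfinrank
  refine ⟨MonoidHom.toAdditive.symm (basis.constr ℕ (Additive.ofMul ∘ w)).toAddMonoidHom,
    fun i ↦ ?_⟩
  have := basis.constr_basis ℕ (Additive.ofMul ∘ w) i
  rw [coe_basisOfTopLeSpanOfCardEqFinrank] at this
  exact congrArg Additive.toMul this

end ElementaryAbelian

section CentralTwist

open Subgroup

variable {G : Type*} [Group G]

theorem MulAut.exists_apply_eq_mul_of_le_center {N : Subgroup G} [N.Characteristic]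
    (hN : N ≤ center G) (α : MulAut G) (f : G →* N) (hf : N ≤ f.ker) :
    ∃ β : MulAut G, ∀ x, β x = α x * f x := by
  have hαN : ∀ x, α x ∈ N ↔ x ∈ N := fun x ↦
    SetLike.ext_iff.mp (‹N.Characteristic›.fixed α) x
  have hfN : ∀ x ∈ N, f x = 1 := fun x hx ↦ hf hx
  let β : G →* G :=
    { toFun x := α x * f x
      map_one' := by simp
      map_mul' x y := by
        have hcomm : Commute (α y) (f x) := mem_center_iff.mp (hN (f x).2) (α y)
        simp only [map_mul, MulMemClass.coe_mul]
        exact hcomm.mul_mul_mul_comm _ _ }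
  have hinj : Function.Injective β := by
    refine (injective_iff_map_eq_one β).mpr fun x hx ↦ ?_
    have hαx : α x = (f x : G)⁻¹ := eq_inv_of_mul_eq_one_left hx
    have hx : x ∈ N := (hαN x).mp (hαx ▸ N.inv_mem (f x).2)
    simpa [hfN x hx] using hαx
  have hsurj : Function.Surjective β := by
    intro y
    obtain ⟨n, hn⟩ : ∃ n, α n = (f (α.symm y) : G)⁻¹ := ⟨α.symm _, α.apply_symm_apply _⟩
    have hnN : n ∈ N := (hαN n).mp (hn ▸ N.inv_mem (f _).2)
    refine ⟨α.symm y * n, ?_⟩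
    simp [β, hn, hfN n hnN]
  exact ⟨MulEquiv.ofBijective β ⟨hinj, hsurj⟩, fun _ ↦ rfl⟩

end CentralTwist

section ActionOnQuotient

open Subgroup

variable {G ι : Type*} [Group G] {N : Subgroup G} [N.Normal] (π : MulAut G →* MulAut (G ⧸ N))
  (hπ : ∀ (α : MulAut G) (x : G), π α x = α x) {a : ι → G} (hgen : closure (Set.range a) = ⊤)
include hπ hgen

theorem mem_ker_iff_forall_inv_mul_apply_mem {β : MulAut G} :
    β ∈ π.ker ↔ ∀ i, (a i)⁻¹ * β (a i) ∈ N := by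
  simp_rw [← QuotientGroup.eq, ← hπ]
  refine ⟨fun h i ↦ by rw [MonoidHom.mem_ker.mp h]; rfl, fun h ↦ ?_⟩
  have : (QuotientGroup.mk' N).comp β.toMonoidHom = QuotientGroup.mk' N :=
    MonoidHom.eq_of_eqOn_dense hgen <| by
      rintro _ ⟨i, rfl⟩
      exact (hπ β (a i)).symm.trans (h i).symm
  refine MonoidHom.mem_ker.mpr (MulEquiv.ext fun q ↦ ?_)
  obtain ⟨x, rfl⟩ := QuotientGroup.mk_surjective q
  rw [hπ]
  exact DFunLike.congr_fun this x

theorem card_ker_eq_card_pow [Finite ι]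
    (hext : ∀ g : ι → N, ∃ β : MulAut G, ∀ i, β (a i) = a i * g i) :
    Nat.card π.ker = Nat.card N ^ Nat.card ι := by
  let T : π.ker → (ι → N) := fun β i ↦
    ⟨(a i)⁻¹ * β.1 (a i), (mem_ker_iff_forall_inv_mul_apply_mem π hπ hgen).mp β.2 i⟩
  have hT : Function.Bijective T := by
    refine ⟨fun β₁ β₂ h ↦ ?_, fun g ↦ ?_⟩
    · have hpt : ∀ i, β₁.1 (a i) = β₂.1 (a i) := fun i ↦
        mul_left_cancel (congrArg Subtype.val (congrFun h i))
      exact Subtype.ext <| MulEquiv.toMonoidHom_injective <|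
        MonoidHom.eq_of_eqOn_dense hgen (by rintro _ ⟨i, rfl⟩; exact hpt i)
    · obtain ⟨β, hβ⟩ := hext g
      have hmem : β ∈ π.ker := (mem_ker_iff_forall_inv_mul_apply_mem π hπ hgen).mpr
        fun i ↦ by simp [hβ i]
      exact ⟨⟨β, hmem⟩, funext fun i ↦ Subtype.ext (by simp [T, hβ i])⟩
  rw [Nat.card_congr (Equiv.ofBijective T hT), Nat.card_fun]

end ActionOnQuotient

section Class2

open Subgroup
open scoped IsMulCommutative

variable {G ι : Type*} [Group G] [Fintype ι] {p : ℕ} [Fact p.Prime]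

theorem exists_mulAut_apply_eq_mul_of_commutator_le_center (hpow : ∀ x : G, x ^ p = 1)
    (hcomm : commutator G ≤ center G) {a : ι → G} (hgen : closure (Set.range a) = ⊤)
    (hcard : Nat.card (G ⧸ commutator G) = p ^ Fintype.card ι) (α : MulAut G) (g : ι → G)
    (hg : ∀ i, g i ∈ commutator G) : ∃ β : MulAut G, ∀ i, β (a i) = α (a i) * g i := by
  have : IsMulCommutative (commutator G) :=
    le_centralizer_iff_isMulCommutative.mp (hcomm.trans (center_le_centralizer _))
  have hof : Function.Surjective (Abelianization.of : G →* Abelianization G) :=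
    QuotientGroup.mk_surjective
  have hgen' : closure (Set.range (Abelianization.of ∘ a)) = ⊤ := by
    rw [Set.range_comp, ← MonoidHom.map_closure, hgen, ← MonoidHom.range_eq_map,
      MonoidHom.range_eq_top.mpr hof]
  obtain ⟨f, hf⟩ := exists_monoidHom_apply_eq_of_card_eq_pow
    (fun x ↦ by obtain ⟨x, rfl⟩ := hof x; rw [← map_pow, hpow, map_one])
    (fun y : commutator G ↦ Subtype.ext (hpow y)) hgen' hcard (fun i ↦ ⟨g i, hg i⟩)
  obtain ⟨β, hβ⟩ := MulAut.exists_apply_eq_mul_of_le_center hcomm α (f.comp Abelianization.of)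
    (Abelianization.commutator_subset_ker _)
  refine ⟨β, fun i ↦ ?_⟩
  rw [hβ, MonoidHom.comp_apply, ← Function.comp_apply (f := ⇑Abelianization.of), hf]

end Class2

theorem stmt_9_general (p k : ℕ) [Fact p.Prime]
    (G : Type*) [Group G]
    (hexp : Monoid.exponent G = p)
    (hclass : upperCentralSeries G 2 = ⊤)
    (a : Fin k → G)
    (hgen : Subgroup.closure (Set.range a) = ⊤)
    (hbasis : Nat.card (G ⧸ commutator G) = p ^ k) :
    (∀ (α : MulAut G) (g : Fin k → G), (∀ i, g i ∈ commutator G) →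
        ∃ β : MulAut G, ∀ i, β (a i) = α (a i) * g i) ∧
    (∀ π : MulAut G →* MulAut (G ⧸ commutator G),
        (∀ (α : MulAut G) (x : G),
          π α (QuotientGroup.mk x) = QuotientGroup.mk (α x)) →
        Nat.card (MulAut G) = Nat.card π.range * Nat.card (commutator G) ^ k) := by
  have hpow (x : G) : x ^ p = 1 := hexp ▸ Monoid.pow_exponent_eq_one x
  have hcomm : commutator G ≤ Subgroup.center G := by
    have hclass : Subgroup.upperCentralSeries G 2 = ⊤ := hclass
    simpa [hclass, commutator_def] using Subgroup.commutator_upperCentralSeries_top_le G 1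
  have hext := exists_mulAut_apply_eq_mul_of_commutator_le_center hpow hcomm hgen
    (by rwa [Fintype.card_fin])
  refine ⟨hext, fun π hπ ↦ ?_⟩
  rw [← π.ker.card_mul_index, Subgroup.index_ker, mul_comm,
    card_ker_eq_card_pow π hπ hgen fun g ↦ by simpa using hext 1 (g ·) fun i ↦ (g i).2,
    Nat.card_fin]

/-- Let G be a finite class-2 exponent-p group generated by a_1,...,a_k whose images
form a basis of the elementary abelian quotient G/G'.  (1) For any automorphism α and
any g_1,...,g_k ∈ G' there is an automorphism β with β(a_i) = α(a_i)·g_i for all i.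
(2) Consequently |Aut G| = |B|·|G'|^k, where B is the image of Aut(G) in Aut(G/G'). -/
theorem stmt_9 (p k : ℕ) [Fact p.Prime] (hp : Odd p)
    (G : Type*) [Group G] [Finite G]
    (hexp : Monoid.exponent G = p)
    (hclass : upperCentralSeries G 2 = ⊤)
    (a : Fin k → G)
    (hgen : Subgroup.closure (Set.range a) = ⊤)
    (hbasis : Nat.card (G ⧸ commutator G) = p ^ k) :
    (∀ (α : MulAut G) (g : Fin k → G), (∀ i, g i ∈ commutator G) →
        ∃ β : MulAut G, ∀ i, β (a i) = α (a i) * g i) ∧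
    (∀ π : MulAut G →* MulAut (G ⧸ commutator G),
        (∀ (α : MulAut G) (x : G),
          π α (QuotientGroup.mk x) = QuotientGroup.mk (α x)) →
        Nat.card (MulAut G) = Nat.card π.range * Nat.card (commutator G) ^ k) :=
  stmt_9_general p k G hexp hclass a hgen hbasis
end

section
/- For an odd prime p and ω a nonsquare in GF(p), the set of invertible 4×4 matrices over GF(p) of the two forms [[α,β,γ,δ],[ε,ζ,η,θ],[ωθ,-ωη,-ζ,ε],[-ωδ,ωγ,β,-α]] and [[α,β,γ,δ],[ε,ζ,η,θ],[-ωθ,ωη,ζ,-ε],[ωδ,-ωγ,-β,α]] forms a group of order 2(p^4-1)(p^4-p^2): the first row (α,β,γ,δ) can be any nonzero vector, and (ε,ζ,η,θ) any vector not in the span of (α,β,γ,δ) and (ωδ,-ωγ,-β,α). -/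
/-!
Let `M` have rows `(0, 0, 0, 1), (0, 0, -1, 0), (0, -ω, 0, 0), (ω, 0, 0, 0)`, so `M ^ 2 = ω`.
The two displayed shapes are exactly the matrices `A` with `A * M = -M * A` and `A * M = M * A`
respectively, and the invertible ones form a group. Since `p` is odd, `M ≠ -M`, and
`diag(1, 1, -1, -1)` anticommutes with `M`, so the centralizer of `M` has index `2` in it.
Since `ω` is not a square, `X ^ 2 - ω` is irreducible, so `M` makes `𝔽_p ^ 4` a `2`-dimensional
vector space over `K = 𝔽_p[X] / (X ^ 2 - ω) ≅ 𝔽_{p ^ 2}`. The matrices commuting with `M` are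
exactly the `K`-linear maps, so the centralizer is `GL₂(𝔽_{p ^ 2})`, of order
`(p ^ 4 - 1) * (p ^ 4 - p ^ 2)`.
-/

open Polynomial Module Matrix

section CentralizerUpToSign

variable {G : Type*} [Group G] [HasDistribNeg G]

def centralizerUpToSign (m : G) : Subgroup G where
  carrier := {g | SemiconjBy g m m ∨ SemiconjBy g m (-m)}
  one_mem' := Or.inl (SemiconjBy.one_left m)
  mul_mem' := by
    rintro a b (ha | ha) (hb | hb)
    · exact Or.inl (ha.mul_left hb)
    · exact Or.inr (ha.neg_right.mul_left hb)
    · exact Or.inr (ha.mul_left hb)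
    · exact Or.inl (by simpa using ha.neg_right.mul_left hb)
  inv_mem' := by
    rintro a (ha | ha)
    · exact Or.inl ha.inv_symm_left
    · exact Or.inr (by simpa using ha.inv_symm_left.neg_right)

theorem mem_centralizerUpToSign {m g : G} :
    g ∈ centralizerUpToSign m ↔ SemiconjBy g m m ∨ SemiconjBy g m (-m) := Iff.rfl

theorem centralizer_le_centralizerUpToSign (m : G) :
    Subgroup.centralizer {m} ≤ centralizerUpToSign m := fun _ hg =>
  Or.inl (Subgroup.mem_centralizer_singleton_iff.mp hg)

theorem card_centralizerUpToSign {m a : G} (hm : -m ≠ m) (ha : SemiconjBy a m (-m)) :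
    Nat.card (centralizerUpToSign m) = 2 * Nat.card (Subgroup.centralizer {m}) := by
  have not_both (g : G) (h₁ : SemiconjBy g m m) (h₂ : SemiconjBy g m (-m)) : False :=
    hm (mul_right_cancel (h₂.eq.symm.trans h₁.eq))
  have hindex : (Subgroup.centralizer {m}).relIndex (centralizerUpToSign m) = 2 := by
    rw [Subgroup.relIndex_eq_two_iff]
    refine ⟨a, Or.inr ha, fun b hb => ?_⟩
    simp only [Subgroup.mem_centralizer_singleton_iff]
    rcases hb with hb | hb
    · exact Or.inr ⟨hb, (not_both _ · (hb.neg_right.mul_left ha))⟩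
    · have hba : SemiconjBy (b * a) m m := by simpa using hb.neg_right.mul_left ha
      exact Or.inl ⟨hba, (not_both _ · hb)⟩
  rw [← hindex, ← Nat.card_congr (Subgroup.subgroupOfEquivOfLe
      (centralizer_le_centralizerUpToSign m)).toEquiv, Subgroup.relIndex, Subgroup.index_mul_card]

end CentralizerUpToSign

theorem MulEquiv.card_centralizer_singleton {G G' : Type*} [Group G] [Group G'] (e : G ≃* G')
    (g : G) : Nat.card (Subgroup.centralizer {e g}) = Nat.card (Subgroup.centralizer {g}) :=
  Nat.card_congr <| (e.toEquiv.subtypeEquiv fun h => by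
    simp only [Subgroup.mem_centralizer_singleton_iff, MulEquiv.toEquiv_eq_coe, EquivLike.coe_coe,
      ← map_mul, e.apply_eq_iff_eq]).symm

section ScalarExtension

variable {F K V : Type*} [CommSemiring F] [Semiring K] [Algebra F K] [AddCommMonoid V]
  [Module F V] [Module K V] [IsScalarTower F K V] {x : K}

theorem map_smul_of_commute_lsmul (hx : Algebra.adjoin F {x} = ⊤) {g : Module.End F V}
    (hg : Commute g (Algebra.lsmul F F V x)) (k : K) (v : V) : g (k • v) = k • g v := by
  have hle : Algebra.adjoin F {x} ≤ (Subalgebra.centralizer F {g}).comap (Algebra.lsmul F F V) :=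
    Algebra.adjoin_le (Set.singleton_subset_iff.mpr
      ((Subalgebra.mem_centralizer_iff F).mpr fun _ h => h ▸ hg))
  have hk := hle (hx ▸ Algebra.mem_top (x := k))
  rw [Subalgebra.mem_comap, Subalgebra.mem_centralizer_iff] at hk
  exact LinearMap.congr_fun (hk g rfl) v

def LinearMap.extendScalarsOfCommute (hx : Algebra.adjoin F {x} = ⊤) (g : Module.End F V)
    (hg : Commute g (Algebra.lsmul F F V x)) : Module.End K V where
  toFun := g
  map_add' := g.map_add
  map_smul' := map_smul_of_commute_lsmul hx hg

variable {u : LinearMap.GeneralLinearGroup F V}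

theorem commute_lsmul_of_mem_centralizer (hu : (u : Module.End F V) = Algebra.lsmul F F V x)
    {g : LinearMap.GeneralLinearGroup F V} (hg : g ∈ Subgroup.centralizer {u}) :
    Commute (g : Module.End F V) (Algebra.lsmul F F V x) :=
  hu ▸ congrArg Units.val (Subgroup.mem_centralizer_singleton_iff.mp hg)

def centralizerEquivGeneralLinearGroup (hx : Algebra.adjoin F {x} = ⊤)
    (hu : (u : Module.End F V) = Algebra.lsmul F F V x) :
    Subgroup.centralizer {u} ≃* LinearMap.GeneralLinearGroup K V where
  toFun g :=
    { val := .extendScalarsOfCommute hx _ (commute_lsmul_of_mem_centralizer hu g.2)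
      inv := .extendScalarsOfCommute hx _ (commute_lsmul_of_mem_centralizer hu (inv_mem g.2))
      val_inv := LinearMap.ext fun v => LinearMap.congr_fun (g : LinearMap.GeneralLinearGroup F V).mul_inv v
      inv_val := LinearMap.ext fun v => LinearMap.congr_fun (g : LinearMap.GeneralLinearGroup F V).inv_mul v }
  invFun f :=
    ⟨{ val := f.val.restrictScalars F
       inv := f.inv.restrictScalars F
       val_inv := LinearMap.ext fun v => LinearMap.congr_fun f.mul_inv v
       inv_val := LinearMap.ext fun v => LinearMap.congr_fun f.inv_mul v },
      Subgroup.mem_centralizer_singleton_iff.mpr <| Units.ext <| LinearMap.ext fun v => by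
        simp [hu]⟩
  left_inv _ := rfl
  right_inv _ := rfl
  map_mul' _ _ := rfl

end ScalarExtension

theorem card_centralizer_eq_card_GL {F K V : Type*} [Field F] [Field K] [Algebra F K]
    [AddCommGroup V] [Module F V] [Module K V] [IsScalarTower F K V] [Module.Finite K V] {x : K}
    (hx : Algebra.adjoin F {x} = ⊤) {u : LinearMap.GeneralLinearGroup F V}
    (hu : (u : Module.End F V) = Algebra.lsmul F F V x) :
    Nat.card (Subgroup.centralizer {u}) = Nat.card (GL (Fin (finrank K V)) K) :=
  Nat.card_congr ((centralizerEquivGeneralLinearGroup hx hu).trans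
    (Matrix.GeneralLinearGroup.toLin' (Module.finBasis K V)).symm).toEquiv

section AdjoinRoot

variable {F A : Type*} [Field F] [Semiring A] [Algebra F A] {f : F[X]} {a : A}

/-- Unlike `AdjoinRoot.liftAlgHom`, the target algebra need not be commutative. -/
noncomputable def AdjoinRoot.liftOfAevalEqZero (ha : aeval a f = 0) : AdjoinRoot f →ₐ[F] A :=
  Ideal.Quotient.liftₐ _ (aeval a) fun b hb => by
    obtain ⟨c, rfl⟩ := Ideal.mem_span_singleton'.mp hb
    simp [ha]

theorem AdjoinRoot.liftOfAevalEqZero_root (ha : aeval a f = 0) :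
    liftOfAevalEqZero ha (root f) = a :=
  aeval_X a

end AdjoinRoot

theorem card_centralizer_of_aeval_eq_zero {F n : Type*} [Field F] [Finite F] [Fintype n]
    [DecidableEq n] {f : F[X]} (hf : Irreducible f) (u : GL n F)
    (hu : aeval (u : Matrix n n F) f = 0) :
    Nat.card (Subgroup.centralizer {u}) = ∏ i ∈ Finset.range (Fintype.card n / f.natDegree),
      (Nat.card F ^ Fintype.card n - Nat.card F ^ (f.natDegree * i)) := by
  have := Fact.mk hf
  set φ := Matrix.GeneralLinearGroup.toLin u
  have hφ : aeval (φ : Module.End F (n → F)) f = 0 := by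
    rw [show (φ : Module.End F (n → F)) = Matrix.toLinAlgEquiv' (u : Matrix n n F) from rfl,
      aeval_algEquiv, AlgHom.comp_apply, hu, map_zero]
  let ρ := AdjoinRoot.liftOfAevalEqZero hφ
  let : Module (AdjoinRoot f) (n → F) := Module.compHom _ ρ.toRingHom
  have : IsScalarTower F (AdjoinRoot f) (n → F) :=
    ⟨fun c k v => show ρ (c • k) v = c • ρ k v by rw [map_smul]; rfl⟩
  have hroot : (φ : Module.End F (n → F)) = Algebra.lsmul F F (n → F) (AdjoinRoot.root f) :=
    (AdjoinRoot.liftOfAevalEqZero_root hφ).symm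
  have : Module.Finite F (AdjoinRoot f) := (AdjoinRoot.powerBasis hf.ne_zero).finite
  have : Finite (AdjoinRoot f) := Module.finite_of_finite F
  have : Module.Finite (AdjoinRoot f) (n → F) := Module.Finite.of_restrictScalars_finite F _ _
  let := Fintype.ofFinite (AdjoinRoot f)
  have hdeg : finrank F (AdjoinRoot f) = f.natDegree := finrank_quotient_span_eq_natDegree
  have hrank : Fintype.card n = f.natDegree * finrank (AdjoinRoot f) (n → F) := by
    rw [← hdeg, finrank_mul_finrank, Module.finrank_fintype_fun_eq_card]
  rw [← MulEquiv.card_centralizer_singleton Matrix.GeneralLinearGroup.toLin,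
    card_centralizer_eq_card_GL AdjoinRoot.adjoinRoot_eq_top hroot, Matrix.card_GL_field,
    Fintype.card_eq_nat_card, Module.natCard_eq_pow_finrank (K := F), hdeg, hrank,
    Nat.mul_div_cancel_left _ hf.natDegree_pos, ← Fin.prod_univ_eq_prod_range]
  simp only [← pow_mul]

section SqrtMat

variable {R : Type*} [CommRing R] (ω : R)

def sqrtMat : Matrix (Fin 4) (Fin 4) R := !![0, 0, 0, 1; 0, 0, -1, 0; 0, -ω, 0, 0; ω, 0, 0, 0]

theorem sqrtMat_mul_self : sqrtMat ω * sqrtMat ω = ω • 1 := by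
  ext i j
  fin_cases i <;> fin_cases j <;> simp [sqrtMat, mul_apply, Fin.sum_univ_four, one_apply]

theorem aeval_sqrtMat : aeval (sqrtMat ω) (X ^ 2 - C ω) = 0 := by
  simp [sq, sqrtMat_mul_self, Algebra.algebraMap_eq_smul_one]

/- In both shape lemmas, rows `0` and `1` of the commutation relation already pin down
rows `2` and `3` of `B`. -/
theorem commute_sqrtMat_iff (B : Matrix (Fin 4) (Fin 4) R) :
    B * sqrtMat ω = sqrtMat ω * B ↔
      ∃ α β γ δ ε ζ η θ : R,
        B = !![α, β, γ, δ; ε, ζ, η, θ; -(ω * θ), ω * η, ζ, -ε; ω * δ, -(ω * γ), -β, α] := by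
  constructor
  · intro h
    refine ⟨B 0 0, B 0 1, B 0 2, B 0 3, B 1 0, B 1 1, B 1 2, B 1 3, ?_⟩
    have entries : ∀ i j, (B * sqrtMat ω) i j = _ := fun i j => congrFun₂ h i j
    have row0 := entries 0
    have row1 := entries 1
    simp [Fin.forall_fin_succ, mul_apply, Fin.sum_univ_four, sqrtMat] at row0 row1
    ext i j
    fin_cases i <;> fin_cases j <;> simp <;> grind
  · rintro ⟨α, β, γ, δ, ε, ζ, η, θ, rfl⟩
    ext i j
    fin_cases i <;> fin_cases j <;> simp [sqrtMat, mul_apply, Fin.sum_univ_four] <;> ring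

theorem anticommute_sqrtMat_iff (B : Matrix (Fin 4) (Fin 4) R) :
    B * sqrtMat ω = -sqrtMat ω * B ↔
      ∃ α β γ δ ε ζ η θ : R,
        B = !![α, β, γ, δ; ε, ζ, η, θ; ω * θ, -(ω * η), -ζ, ε; -(ω * δ), ω * γ, β, -α] := by
  constructor
  · intro h
    refine ⟨B 0 0, B 0 1, B 0 2, B 0 3, B 1 0, B 1 1, B 1 2, B 1 3, ?_⟩
    have entries : ∀ i j, (B * sqrtMat ω) i j = _ := fun i j => congrFun₂ h i j
    have row0 := entries 0
    have row1 := entries 1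
    simp [Fin.forall_fin_succ, mul_apply, Fin.sum_univ_four, sqrtMat] at row0 row1
    ext i j
    fin_cases i <;> fin_cases j <;> simp <;> grind
  · rintro ⟨α, β, γ, δ, ε, ζ, η, θ, rfl⟩
    ext i j
    fin_cases i <;> fin_cases j <;> simp [sqrtMat, mul_apply, Fin.sum_univ_four] <;> ring

end SqrtMat

section SqrtMatUnit

variable {F : Type*} [Field F] {ω : F}

def sqrtMatUnit (hω : ω ≠ 0) : GL (Fin 4) F where
  val := sqrtMat ω
  inv := ω⁻¹ • sqrtMat ω
  val_inv := by rw [mul_smul_comm, sqrtMat_mul_self, smul_smul, inv_mul_cancel₀ hω, one_smul]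
  inv_val := by rw [smul_mul_assoc, sqrtMat_mul_self, smul_smul, inv_mul_cancel₀ hω, one_smul]

theorem neg_sqrtMatUnit_ne (hF : ringChar F ≠ 2) (hω : ω ≠ 0) :
    -sqrtMatUnit hω ≠ sqrtMatUnit hω := by
  intro h
  have h30 := congrArg (fun u : GL (Fin 4) F => (u : Matrix (Fin 4) (Fin 4) F) 3 0) h
  simp [sqrtMatUnit, sqrtMat, Ring.eq_self_iff_eq_zero_of_char_ne_two hF, hω] at h30

theorem exists_semiconjBy_sqrtMatUnit_neg (hω : ω ≠ 0) :
    ∃ a : GL (Fin 4) F, SemiconjBy a (sqrtMatUnit hω) (-sqrtMatUnit hω) := by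
  let D : Matrix (Fin 4) (Fin 4) F := !![1, 0, 0, 0; 0, 1, 0, 0; 0, 0, -1, 0; 0, 0, 0, -1]
  have hD : D * D = 1 := by
    ext i j
    fin_cases i <;> fin_cases j <;> simp [D, mul_apply, Fin.sum_univ_four, one_apply]
  have hanti : D * sqrtMat ω = -sqrtMat ω * D :=
    (anticommute_sqrtMat_iff ω D).mpr ⟨1, 0, 0, 0, 0, 1, 0, 0, by simp [D]⟩
  exact ⟨⟨D, D, hD, hD⟩, Units.ext (by simpa [sqrtMatUnit] using hanti)⟩

end SqrtMatUnit

/-- For ω a nonsquare mod p, the invertible 4×4 matrices of the two displayed shapes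
form a subgroup of GL(4,p) of order 2(p^4-1)(p^4-p^2). -/
theorem stmt_12 (p : ℕ) [Fact p.Prime] (hp : Odd p)
    (ω : ZMod p) (hω : ¬ IsSquare ω) :
    ∃ H : Subgroup (GL (Fin 4) (ZMod p)),
      (∀ A : GL (Fin 4) (ZMod p), A ∈ H ↔
        ∃ α β γ δ ε ζ η θ : ZMod p,
          (A : Matrix (Fin 4) (Fin 4) (ZMod p)) =
              !![α, β, γ, δ; ε, ζ, η, θ;
                 ω * θ, -(ω * η), -ζ, ε;
                 -(ω * δ), ω * γ, β, -α] ∨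
          (A : Matrix (Fin 4) (Fin 4) (ZMod p)) =
              !![α, β, γ, δ; ε, ζ, η, θ;
                 -(ω * θ), ω * η, ζ, -ε;
                 ω * δ, -(ω * γ), -β, α]) ∧
      (Nat.card H : ℤ) = 2 * (p ^ 4 - 1) * (p ^ 4 - p ^ 2) := by
  have hω0 : ω ≠ 0 := fun h => hω (h ▸ IsSquare.zero)
  have hchar : ringChar (ZMod p) ≠ 2 := by
    rw [ZMod.ringChar_zmod_n]
    rintro rfl
    exact Nat.not_odd_iff_even.mpr even_two hp
  have hirr : Irreducible (X ^ 2 - C ω) :=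
    X_pow_sub_C_irreducible_of_prime Nat.prime_two fun b hb => hω ⟨b, by rw [← hb, sq]⟩
  refine ⟨centralizerUpToSign (sqrtMatUnit hω0), fun A => ?_, ?_⟩
  · simp only [mem_centralizerUpToSign, SemiconjBy, Units.ext_iff, Units.val_mul, Units.val_neg,
      sqrtMatUnit, commute_sqrtMat_iff, anticommute_sqrtMat_iff, exists_or]
    exact or_comm
  · obtain ⟨a, ha⟩ := exists_semiconjBy_sqrtMatUnit_neg hω0
    rw [card_centralizerUpToSign (neg_sqrtMatUnit_ne hchar hω0) ha,
      card_centralizer_of_aeval_eq_zero hirr _ (aeval_sqrtMat ω)]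
    have h1 : 1 ≤ p ^ 4 := Nat.one_le_pow _ _ (Fact.out : p.Prime).pos
    have h2 : p ^ 2 ≤ p ^ 4 := Nat.pow_le_pow_right (Fact.out : p.Prime).pos (by norm_num)
    simp only [natDegree_X_pow_sub_C, Fintype.card_fin, Nat.card_zmod, Nat.reduceDiv,
      Finset.prod_range_succ, Finset.prod_range_zero, mul_zero, mul_one, pow_zero, one_mul]
    push_cast [Nat.cast_sub h1, Nat.cast_sub h2]
    ring
end

section
/- For an odd prime p, the group G = ⟨a,b,c,d | [c,b]=[d,a]=[d,c]=1, class 2, exponent p⟩ of order p^6 (with G' generated by [b,a],[c,a],[d,b]) has exactly p^4 + 2p^3 - p^2 - 2p + 1 conjugacy classes. -/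
/-!
Every element of `G` is uniquely `[b,a]^u [c,a]^v a^α b^β c^γ d^δ` with exponents in
`F = ZMod p`. Since commutators are central, `g^m h^n = [g,h]^(mn) h^n g^m`, so collecting a
generator power into a normal form gives again a normal form: normal forms exhaust `G`, and they
are unique by counting. Collecting a whole product gives the multiplication law, by which the
normal forms with exponents `(A, B, C, D, s, t)` and `(α, β, γ, δ, u, v)` commute iff
`(Bα + Dβ - Aβ - Bδ, Cα - Aγ) = 0`. The substitution
`(B, β) ⬝ (α - δ, D - A) = 0`, `(α, -A) ⬝ (C, γ) = 0` splits this into two independent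
orthogonality conditions on `F² × F²`, each with `p³ + p² - p` solutions. Hence `G` has
`p⁴ (p³ + p² - p)²` commuting pairs, and dividing by `|G| = p⁶` gives `(p² + p - 1)²` classes.
-/

open scoped commutatorElement

namespace ClassTwoExponentP

variable {G : Type*} [Group G] {p : ℕ}

section PowZMod

def powZMod (g : G) (x : ZMod p) : G := g ^ x.val

lemma pow_mod_of_pow_eq_one {g : G} (hg : g ^ p = 1) (m : ℕ) : g ^ (m % p) = g ^ m := by
  rw [← pow_mod_orderOf, Nat.mod_mod_of_dvd _ (orderOf_dvd_of_pow_eq_one hg), pow_mod_orderOf]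

@[simp]
lemma powZMod_zero (g : G) : powZMod g (0 : ZMod p) = 1 := by
  simp [powZMod]

lemma powZMod_add [NeZero p] {g : G} (hg : g ^ p = 1) (x y : ZMod p) :
    powZMod g (x + y) = powZMod g x * powZMod g y := by
  rw [powZMod, ZMod.val_add, pow_mod_of_pow_eq_one hg, pow_add, powZMod, powZMod]

lemma powZMod_one [Fact (1 < p)] (g : G) : powZMod g (1 : ZMod p) = g := by
  rw [powZMod, ZMod.val_one, pow_one]

lemma powZMod_neg_one [Fact (1 < p)] {g : G} (hg : g ^ p = 1) :
    powZMod g (-1 : ZMod p) = g⁻¹ := by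
  refine eq_inv_of_mul_eq_one_left ?_
  conv_lhs => rhs; rw [← powZMod_one (p := p) g]
  rw [← powZMod_add hg, neg_add_cancel, powZMod_zero]

lemma _root_.Commute.powZMod_powZMod {g h : G} (hgh : Commute g h) (x y : ZMod p) :
    Commute (powZMod g x) (powZMod h y) :=
  hgh.pow_pow _ _

end PowZMod

section CentralCommutators

variable (hZ : ∀ g h k : G, Commute ⁅g, h⁆ k)
include hZ

lemma conj_pow_eq_commutator_pow_mul (g h : G) (m : ℕ) :
    g ^ m * h * (g ^ m)⁻¹ = ⁅g, h⁆ ^ m * h := by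
  induction m with
  | zero => simp
  | succ m ih =>
    calc g ^ (m + 1) * h * (g ^ (m + 1))⁻¹ = g * (g ^ m * h * (g ^ m)⁻¹) * g⁻¹ := by group
      _ = ⁅g, h⁆ ^ m * (g * h * g⁻¹) := by
        rw [ih, ((hZ g h g).pow_left m).symm.left_comm, mul_assoc, mul_assoc]
      _ = ⁅g, h⁆ ^ m * (⁅g, h⁆ * h) := by rw [commutatorElement_def, inv_mul_cancel_right]
      _ = ⁅g, h⁆ ^ (m + 1) * h := by rw [pow_succ, mul_assoc]

lemma pow_mul_pow_eq_commutator_pow_mul (g h : G) (m n : ℕ) :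
    g ^ m * h ^ n = ⁅g, h⁆ ^ (m * n) * (h ^ n * g ^ m) := by
  have hconj : g ^ m * h ^ n * (g ^ m)⁻¹ = ⁅g, h⁆ ^ (m * n) * h ^ n := by
    rw [← conj_pow, conj_pow_eq_commutator_pow_mul hZ, ((hZ g h h).pow_left m).mul_pow,
      pow_mul]
  rw [← mul_assoc, ← hconj, inv_mul_cancel_right]

lemma powZMod_mul_powZMod_mul [NeZero p] (hE : ∀ g : G, g ^ p = 1) (g h X : G) (x y : ZMod p) :
    powZMod g x * (powZMod h y * X) =
      powZMod ⁅g, h⁆ (x * y) * (powZMod h y * (powZMod g x * X)) := by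
  simp only [powZMod]
  rw [← mul_assoc, pow_mul_pow_eq_commutator_pow_mul hZ, ZMod.val_mul,
    pow_mod_of_pow_eq_one (hE _)]
  simp only [mul_assoc]

end CentralCommutators

section Counting

variable (R : Type*) [CommRing R]

abbrev Coords := R × R × R × R × R × R

def OrthogonalPairs : Type _ :=
  {vw : (R × R) × (R × R) // vw.1.1 * vw.2.1 + vw.1.2 * vw.2.2 = 0}

variable {R}

def commutatorForm : Coords R → Coords R → R × R
  | (A, B, C, D, _, _), (α, β, γ, δ, _, _) => (B * α + D * β - A * β - B * δ, C * α - A * γ)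

variable (R) in
def commutingCoordsEquiv :
    {xy : Coords R × Coords R // commutatorForm xy.1 xy.2 = 0} ≃
      (R × R × R × R) × OrthogonalPairs R × OrthogonalPairs R where
  toFun := fun ⟨((A, B, C, D, s, t), (α, β, γ, δ, u, v)), h⟩ =>
    ((s, t, u, v),
      ⟨((B, β), (α - δ, D - A)), by
        simp only [commutatorForm, Prod.mk_eq_zero] at h
        linear_combination h.1⟩,
      ⟨((α, -A), (C, γ)), by
        simp only [commutatorForm, Prod.mk_eq_zero] at h
        linear_combination h.2⟩)
  invFun := fun ((s, t, u, v), ⟨((B, β), (e, f)), h₁⟩, ⟨((α, m), (C, γ)), h₂⟩) =>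
    ⟨((-m, B, C, f - m, s, t), (α, β, γ, α - e, u, v)), by
      simp only [commutatorForm, Prod.mk_eq_zero]
      exact ⟨by linear_combination h₁, by linear_combination h₂⟩⟩
  left_inv := by
    rintro ⟨⟨⟨A, B, C, D, s, t⟩, α, β, γ, δ, u, v⟩, h⟩
    simp
  right_inv := by
    rintro ⟨⟨s, t, u, v⟩, ⟨⟨⟨B, β⟩, e, f⟩, h₁⟩, ⟨⟨⟨α, m⟩, C, γ⟩, h₂⟩⟩
    simp [OrthogonalPairs]

variable {F : Type*} [Field F]

lemma card_orthogonal_of_ne_zero [Finite F] {v : F × F} (hv : v ≠ 0) :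
    Nat.card {w : F × F // v.1 * w.1 + v.2 * w.2 = 0} = Nat.card F := by
  let f : F × F →+ F :=
    AddMonoidHom.mk' (fun w => v.1 * w.1 + v.2 * w.2) fun w w' => by
      simp only [Prod.fst_add, Prod.snd_add]; ring
  have hf : Function.Surjective f := by
    obtain ⟨v₁, v₂⟩ := v
    intro x
    by_cases h₁ : v₁ = 0
    · have h₂ : v₂ ≠ 0 := by rintro rfl; exact hv (by rw [h₁, Prod.mk_zero_zero])
      exact ⟨(0, x / v₂), by simp [f, h₁, mul_div_cancel₀ x h₂]⟩
    · exact ⟨(x / v₁, 0), by simp [f, mul_div_cancel₀ x h₁]⟩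
  have hcard := f.ker.card_mul_index
  rw [AddSubgroup.index_ker, f.range_eq_top.mpr hf, AddSubgroup.card_top, Nat.card_prod] at hcard
  exact Nat.eq_of_mul_eq_mul_right Nat.card_pos hcard

lemma card_orthogonalPairs [Fintype F] :
    Nat.card (OrthogonalPairs F) = Nat.card F ^ 2 + (Nat.card F ^ 2 - 1) * Nat.card F := by
  classical
  rw [OrthogonalPairs, Nat.card_congr (Equiv.subtypeProdEquivSigmaSubtype
    fun v w : F × F => v.1 * w.1 + v.2 * w.2 = 0), Nat.card_sigma, Fintype.sum_eq_add_sum_compl 0,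
    Finset.sum_congr rfl fun v hv => card_orthogonal_of_ne_zero (by simpa using hv)]
  simp [Finset.card_compl, Nat.card_eq_fintype_card, sq]

end Counting

section NormalForm

variable [NeZero p] {a b c d : G}

def normalForm (a b c d : G) : Coords (ZMod p) → G
  | (α, β, γ, δ, u, v) => powZMod ⁅b, a⁆ u * powZMod ⁅c, a⁆ v *
      (powZMod a α * (powZMod b β * (powZMod c γ * powZMod d δ)))

omit [NeZero p] in
@[simp]
lemma normalForm_zero : normalForm a b c d (0 : Coords (ZMod p)) = 1 := by
  simp [normalForm]

variable (hE : ∀ g : G, g ^ p = 1) (hZ : ∀ g h k : G, Commute ⁅g, h⁆ k)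
include hE hZ

omit [NeZero p] hE in
lemma commute_powZMod_commutator_mul (u v : ZMod p) (k : G) :
    Commute (powZMod ⁅b, a⁆ u * powZMod ⁅c, a⁆ v) k :=
  ((hZ b a k).pow_left _).mul_left ((hZ c a k).pow_left _)

omit hZ in
lemma powZMod_commutator_ba_mul_normalForm (n α β γ δ u v : ZMod p) :
    powZMod ⁅b, a⁆ n * normalForm a b c d (α, β, γ, δ, u, v) =
      normalForm a b c d (α, β, γ, δ, n + u, v) := by
  rw [normalForm, normalForm, ← mul_assoc (powZMod _ n), ← mul_assoc (powZMod _ n),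
    ← powZMod_add (hE _)]

lemma powZMod_commutator_ca_mul_normalForm (n α β γ δ u v : ZMod p) :
    powZMod ⁅c, a⁆ n * normalForm a b c d (α, β, γ, δ, u, v) =
      normalForm a b c d (α, β, γ, δ, u, n + v) := by
  rw [normalForm, normalForm, ← mul_assoc (powZMod _ n),
    ((hZ c a _).powZMod_powZMod _ _).left_comm, ← powZMod_add (hE _)]

lemma powZMod_a_mul_normalForm (n α β γ δ u v : ZMod p) :
    powZMod a n * normalForm a b c d (α, β, γ, δ, u, v) =
      normalForm a b c d (n + α, β, γ, δ, u, v) := by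
  rw [normalForm, normalForm, (commute_powZMod_commutator_mul hZ u v _).symm.left_comm,
    ← mul_assoc (powZMod a n), ← powZMod_add (hE _)]

lemma powZMod_b_mul_normalForm (n α β γ δ u v : ZMod p) :
    powZMod b n * normalForm a b c d (α, β, γ, δ, u, v) =
      normalForm a b c d (α, n + β, γ, δ, n * α + u, v) := by
  rw [← powZMod_commutator_ba_mul_normalForm hE, normalForm, normalForm,
    (commute_powZMod_commutator_mul hZ u v _).symm.left_comm, powZMod_mul_powZMod_mul hZ hE b a,
    ← mul_assoc (powZMod b n), ← powZMod_add (hE _),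
    (commute_powZMod_commutator_mul hZ u v _).left_comm]

lemma powZMod_c_mul_normalForm (h1 : ⁅c, b⁆ = 1) (n α β γ δ u v : ZMod p) :
    powZMod c n * normalForm a b c d (α, β, γ, δ, u, v) =
      normalForm a b c d (α, β, n + γ, δ, u, n * α + v) := by
  have hcb := commutatorElement_eq_one_iff_commute.mp h1
  rw [← powZMod_commutator_ca_mul_normalForm hE hZ, normalForm, normalForm,
    (commute_powZMod_commutator_mul hZ u v _).symm.left_comm, powZMod_mul_powZMod_mul hZ hE c a,
    (hcb.powZMod_powZMod n β).left_comm, ← mul_assoc (powZMod c n), ← powZMod_add (hE _),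
    (commute_powZMod_commutator_mul hZ u v _).left_comm]

lemma powZMod_d_mul_normalForm (h2 : ⁅d, a⁆ = 1) (h3 : ⁅d, b⁆ = ⁅b, a⁆) (h4 : ⁅d, c⁆ = 1)
    (n α β γ δ u v : ZMod p) :
    powZMod d n * normalForm a b c d (α, β, γ, δ, u, v) =
      normalForm a b c d (α, β, γ, n + δ, n * β + u, v) := by
  have hda := commutatorElement_eq_one_iff_commute.mp h2
  have hdc := commutatorElement_eq_one_iff_commute.mp h4
  rw [← powZMod_commutator_ba_mul_normalForm hE, normalForm, normalForm,
    (commute_powZMod_commutator_mul hZ u v _).symm.left_comm, (hda.powZMod_powZMod n α).left_comm,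
    powZMod_mul_powZMod_mul hZ hE d b, h3, (hdc.powZMod_powZMod n γ).left_comm,
    ← powZMod_add (hE _), ((hZ b a _).powZMod_powZMod _ α).symm.left_comm,
    (commute_powZMod_commutator_mul hZ u v _).left_comm]

lemma normalForm_mul (h1 : ⁅c, b⁆ = 1) (h2 : ⁅d, a⁆ = 1) (h3 : ⁅d, b⁆ = ⁅b, a⁆) (h4 : ⁅d, c⁆ = 1)
    (A B C D s t α β γ δ u v : ZMod p) :
    normalForm a b c d (A, B, C, D, s, t) * normalForm a b c d (α, β, γ, δ, u, v) =
      normalForm a b c d (A + α, B + β, C + γ, D + δ, s + u + B * α + D * β, t + v + C * α) := by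
  nth_rewrite 1 [normalForm]
  simp only [mul_assoc]
  rw [powZMod_d_mul_normalForm hE hZ h2 h3 h4, powZMod_c_mul_normalForm hE hZ h1,
    powZMod_b_mul_normalForm hE hZ, powZMod_a_mul_normalForm hE hZ,
    powZMod_commutator_ca_mul_normalForm hE hZ, powZMod_commutator_ba_mul_normalForm hE]
  congr 1
  simp only [Prod.mk.injEq, true_and]
  constructor <;> ring

lemma commute_normalForm_iff (hinj : Function.Injective (normalForm a b c d : Coords (ZMod p) → G))
    (h1 : ⁅c, b⁆ = 1) (h2 : ⁅d, a⁆ = 1) (h3 : ⁅d, b⁆ = ⁅b, a⁆) (h4 : ⁅d, c⁆ = 1)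
    (x y : Coords (ZMod p)) :
    Commute (normalForm a b c d x) (normalForm a b c d y) ↔ commutatorForm x y = 0 := by
  obtain ⟨A, B, C, D, s, t⟩ := x
  obtain ⟨α, β, γ, δ, u, v⟩ := y
  rw [Commute, SemiconjBy, normalForm_mul hE hZ h1 h2 h3 h4, normalForm_mul hE hZ h1 h2 h3 h4,
    hinj.eq_iff]
  simp only [commutatorForm, Prod.mk.injEq, Prod.mk_eq_zero]
  constructor
  · rintro ⟨-, -, -, -, hu, hv⟩
    exact ⟨by linear_combination hu, by linear_combination hv⟩
  · rintro ⟨hu, hv⟩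
    exact ⟨add_comm _ _, add_comm _ _, add_comm _ _, add_comm _ _,
      by linear_combination hu, by linear_combination hv⟩

lemma exists_powZMod_mul_normalForm_eq (h1 : ⁅c, b⁆ = 1) (h2 : ⁅d, a⁆ = 1)
    (h3 : ⁅d, b⁆ = ⁅b, a⁆) (h4 : ⁅d, c⁆ = 1) {g : G} (hg : g ∈ ({a, b, c, d} : Set G))
    (n : ZMod p) (x : Coords (ZMod p)) :
    ∃ y : Coords (ZMod p), normalForm a b c d y = powZMod g n * normalForm a b c d x := by
  obtain ⟨α, β, γ, δ, u, v⟩ := x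
  rcases hg with rfl | rfl | rfl | rfl
  · exact ⟨_, (powZMod_a_mul_normalForm hE hZ ..).symm⟩
  · exact ⟨_, (powZMod_b_mul_normalForm hE hZ ..).symm⟩
  · exact ⟨_, (powZMod_c_mul_normalForm hE hZ h1 ..).symm⟩
  · exact ⟨_, (powZMod_d_mul_normalForm hE hZ h2 h3 h4 ..).symm⟩

lemma normalForm_surjective [Fact (1 < p)] (hgen : Subgroup.closure {a, b, c, d} = ⊤)
    (h1 : ⁅c, b⁆ = 1) (h2 : ⁅d, a⁆ = 1) (h3 : ⁅d, b⁆ = ⁅b, a⁆) (h4 : ⁅d, c⁆ = 1) :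
    Function.Surjective (normalForm a b c d : Coords (ZMod p) → G) := by
  intro g
  have hg : g ∈ Subgroup.closure {a, b, c, d} := hgen ▸ Subgroup.mem_top g
  induction hg using Subgroup.closure_induction_left with
  | one => exact ⟨0, normalForm_zero⟩
  | mul_left g hg _ _ ih =>
    obtain ⟨x, rfl⟩ := ih
    rw [← powZMod_one (p := p) g]
    exact exists_powZMod_mul_normalForm_eq hE hZ h1 h2 h3 h4 hg 1 x
  | inv_mul_cancel g hg _ _ ih =>
    obtain ⟨x, rfl⟩ := ih
    rw [← powZMod_neg_one (hE g)]
    exact exists_powZMod_mul_normalForm_eq hE hZ h1 h2 h3 h4 hg (-1) x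

lemma normalForm_bijective [Fact (1 < p)] (hgen : Subgroup.closure {a, b, c, d} = ⊤)
    (h1 : ⁅c, b⁆ = 1) (h2 : ⁅d, a⁆ = 1) (h3 : ⁅d, b⁆ = ⁅b, a⁆) (h4 : ⁅d, c⁆ = 1)
    (hcard : Nat.card G = p ^ 6) :
    Function.Bijective (normalForm a b c d : Coords (ZMod p) → G) := by
  refine (Nat.bijective_iff_surjective_and_card _).mpr
    ⟨normalForm_surjective hE hZ hgen h1 h2 h3 h4, ?_⟩
  simp only [Nat.card_prod, Nat.card_zmod, hcard]
  ring

lemma card_commute_eq_card_commutatorForm_eq_zero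
    (hbij : Function.Bijective (normalForm a b c d : Coords (ZMod p) → G))
    (h1 : ⁅c, b⁆ = 1) (h2 : ⁅d, a⁆ = 1) (h3 : ⁅d, b⁆ = ⁅b, a⁆) (h4 : ⁅d, c⁆ = 1) :
    Nat.card {gg : G × G // Commute gg.1 gg.2} =
      Nat.card {xy : Coords (ZMod p) × Coords (ZMod p) // commutatorForm xy.1 xy.2 = 0} :=
  let e := Equiv.ofBijective _ hbij
  Nat.card_congr (e.prodCongr e |>.subtypeEquiv fun xy =>
    (commute_normalForm_iff hE hZ hbij.injective h1 h2 h3 h4 xy.1 xy.2).symm).symm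

end NormalForm

lemma commute_commutator_of_upperCentralSeries_two_eq_top
    (hG : Subgroup.upperCentralSeries G 2 = ⊤) (g h k : G) : Commute ⁅g, h⁆ k := by
  have hg : g ∈ Subgroup.upperCentralSeries G (1 + 1) := hG ▸ Subgroup.mem_top g
  have hgh := Subgroup.mem_upperCentralSeries_succ_iff.mp hg h
  rw [Subgroup.upperCentralSeries_one] at hgh
  exact (Subgroup.mem_center_iff.mp hgh k).symm

end ClassTwoExponentP

open ClassTwoExponentP in
theorem stmt_14_general (p : ℕ) [Fact p.Prime]
    (G : Type*) [Group G]
    (a b c d : G)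
    (hgen : Subgroup.closure {a, b, c, d} = ⊤)
    (h1 : ⁅c, b⁆ = 1) (h2 : ⁅d, a⁆ = 1) (h3 : ⁅d, b⁆ = ⁅b, a⁆) (h4 : ⁅d, c⁆ = 1)
    (hcard : Nat.card G = p ^ 6)
    (hexp : Monoid.exponent G = p)
    (hclass : Subgroup.upperCentralSeries G 2 = ⊤) :
    (Nat.card (ConjClasses G) : ℤ) = p ^ 4 + 2 * p ^ 3 - p ^ 2 - 2 * p + 1 := by
  have hE : ∀ g : G, g ^ p = 1 := fun g => hexp ▸ Monoid.pow_exponent_eq_one g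
  have hZ := commute_commutator_of_upperCentralSeries_two_eq_top hclass
  have hbij := normalForm_bijective hE hZ hgen h1 h2 h3 h4 hcard
  have hk : Nat.card (ConjClasses G) * p ^ 6 = p ^ 4 * (p ^ 2 + (p ^ 2 - 1) * p) ^ 2 := by
    rw [← hcard, ← card_comm_eq_card_conjClasses_mul_card,
      card_commute_eq_card_commutatorForm_eq_zero hE hZ hbij h1 h2 h3 h4,
      Nat.card_congr (commutingCoordsEquiv _)]
    simp only [Nat.card_prod, card_orthogonalPairs, Nat.card_zmod]
    ring
  have hp : (p : ℤ) ^ 6 ≠ 0 := pow_ne_zero 6 (Nat.cast_ne_zero.mpr (Fact.out : p.Prime).ne_zero)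
  have hk' := congrArg (Nat.cast : ℕ → ℤ) hk
  push_cast [Nat.cast_sub (Nat.one_le_pow 2 p (Fact.out : p.Prime).pos)] at hk'
  exact mul_right_cancel₀ hp (by linear_combination hk')

/-- Group 6.4.2: the class-2 exponent-p group of order p^6 on generators a,b,c,d
with relations [c,b]=1, [d,a]=1, [d,b]=[b,a], [d,c]=1 has exactly
p^4 + 2p^3 - p^2 - 2p + 1 conjugacy classes. -/
theorem stmt_14 (p : ℕ) [Fact p.Prime] (hp : Odd p)
    (G : Type*) [Group G]
    (a b c d : G)
    (hgen : Subgroup.closure {a, b, c, d} = ⊤)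
    (h1 : ⁅c, b⁆ = 1) (h2 : ⁅d, a⁆ = 1) (h3 : ⁅d, b⁆ = ⁅b, a⁆) (h4 : ⁅d, c⁆ = 1)
    (hcard : Nat.card G = p ^ 6)
    (hexp : Monoid.exponent G = p)
    (hclass : Subgroup.upperCentralSeries G 2 = ⊤) :
    (Nat.card (ConjClasses G) : ℤ) = p ^ 4 + 2 * p ^ 3 - p ^ 2 - 2 * p + 1 :=
  stmt_14_general p G a b c d hgen h1 h2 h3 h4 hcard hexp hclass
end

section
/- For an odd prime p, the central product of two extraspecial groups of order p^3 and exponent p, times a cyclic group of order p (group of order p^6), has exactly p^5 + p^2 - p conjugacy classes. -/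
/-!
The commutator subgroup of `H` is central, so the conjugacy class of `g` lies in the coset
`Z(H) g` and has at most `p` elements; being an orbit of a `p`-group, a noncentral class has
exactly `p` elements. The class equation `p ^ 5 = p + p · #(noncentral classes)` then gives
`p ^ 4 + p - 1` classes in `H`, and the abelian factor multiplies this number by `p`.
-/

section ConjClassesProd

variable {G K : Type*} [Group G] [Group K]

theorem Nat.card_conjClasses_prod [Finite G] [Finite K] :
    Nat.card (ConjClasses (G × K)) = Nat.card (ConjClasses G) * Nat.card (ConjClasses K) := by
  have h := commProb_prod G K
  have hG : (Nat.card G : ℚ) ≠ 0 := Nat.cast_ne_zero.2 Nat.card_pos.ne'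
  have hK : (Nat.card K : ℚ) ≠ 0 := Nat.cast_ne_zero.2 Nat.card_pos.ne'
  rw [commProb_def', commProb_def', commProb_def', Nat.card_prod, Nat.cast_mul] at h
  field_simp at h
  exact_mod_cast h

theorem Nat.card_conjClasses_of_commGroup (A : Type*) [CommGroup A] :
    Nat.card (ConjClasses A) = Nat.card A :=
  (Nat.card_congr ConjClasses.mkEquiv).symm

end ConjClassesProd

section CentralCommutator

variable {p : ℕ} [Fact p.Prime] {G : Type*} [Group G]

open scoped commutatorElement

theorem ConjClasses.carrier_mk_subset_image_center (hG : commutator G ≤ Subgroup.center G)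
    (g : G) : (ConjClasses.mk g).carrier ⊆ (· * g) '' (Subgroup.center G : Set G) := by
  intro h hh
  rw [ConjClasses.mem_carrier_iff_mk_eq, ConjClasses.mk_eq_mk_iff_isConj] at hh
  obtain ⟨c, rfl⟩ := isConj_iff.1 hh.symm
  exact ⟨⁅c, g⁆, hG (Subgroup.commutator_mem_commutator (Subgroup.mem_top c) (Subgroup.mem_top g)),
    by group⟩

theorem ConjClasses.card_carrier_le_card_center [Finite G]
    (hG : commutator G ≤ Subgroup.center G) (x : ConjClasses G) :
    Nat.card x.carrier ≤ Nat.card (Subgroup.center G) := by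
  obtain ⟨g, rfl⟩ := ConjClasses.mk_surjective x
  rw [Nat.card_coe_set_eq, ← SetLike.coe_sort_coe, Nat.card_coe_set_eq]
  exact (Set.ncard_le_ncard (carrier_mk_subset_image_center hG g) (Set.toFinite _)).trans
    (Set.ncard_image_le (Set.toFinite _))

theorem IsPGroup.exists_card_carrier_eq_pow [Finite G] (hG : IsPGroup p G) (x : ConjClasses G) :
    ∃ n : ℕ, Nat.card x.carrier = p ^ n := by
  obtain ⟨g, rfl⟩ := ConjClasses.mk_surjective x
  rw [← ConjAct.orbit_eq_carrier_conjClasses]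
  exact (IsPGroup.of_equiv hG ConjAct.toConjAct).card_orbit g

theorem IsPGroup.card_carrier_of_mem_noncenter [Finite G] (hG : IsPGroup p G)
    (hcomm : commutator G ≤ Subgroup.center G) (hZ : Nat.card (Subgroup.center G) = p)
    {x : ConjClasses G} (hx : x ∈ ConjClasses.noncenter G) : Nat.card x.carrier = p := by
  have hp : p.Prime := Fact.out
  obtain ⟨n, hn⟩ := hG.exists_card_carrier_eq_pow x
  have hle : p ^ n ≤ p ^ 1 := by
    simpa [hn, hZ] using ConjClasses.card_carrier_le_card_center hcomm x
  have hgt : p ^ 0 < p ^ n := by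
    rw [← hn, pow_zero, Nat.card_coe_set_eq]
    exact (Set.one_lt_ncard (Set.toFinite _)).2 hx
  rw [hn, le_antisymm ((pow_le_pow_iff_right₀ hp.one_lt).1 hle)
    ((pow_lt_pow_iff_right₀ hp.one_lt).1 hgt), pow_one]

theorem IsPGroup.card_conjClasses_of_commutator_le_center [Finite G] (hG : IsPGroup p G)
    (hcomm : commutator G ≤ Subgroup.center G) (hZ : Nat.card (Subgroup.center G) = p) :
    p * Nat.card (ConjClasses G) + p = Nat.card G + p ^ 2 := by
  have hclass := Group.nat_card_center_add_sum_card_noncenter_eq_card G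
  rw [finsum_mem_congr rfl fun x hx => hG.card_carrier_of_mem_noncenter hcomm hZ hx,
    finsum_mem_eq_finite_toFinset_sum _ (Set.toFinite _), Finset.sum_const, smul_eq_mul,
    ← Set.ncard_eq_toFinset_card _ (Set.toFinite _), hZ] at hclass
  have hcentral : (ConjClasses.noncenter G)ᶜ.ncard = p := by
    rw [← Nat.card_coe_set_eq, ← Nat.card_congr ((ConjClasses.mk_bijOn G).equiv _),
      SetLike.coe_sort_coe, hZ]
  have htotal := Set.ncard_add_ncard_compl (ConjClasses.noncenter G)
  rw [hcentral] at htotal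
  rw [← htotal, ← hclass]
  ring

end CentralCommutator

theorem stmt_17_general (p : ℕ) [Fact p.Prime]
    (H : Type*) [Group H]
    (hcard : Nat.card H = p ^ 5)
    (hextra : commutator H = Subgroup.center H)
    (hcenter : Nat.card (Subgroup.center H) = p) :
    (Nat.card (ConjClasses (H × Multiplicative (ZMod p))) : ℤ) = p ^ 5 + p ^ 2 - p := by
  have : Finite H := Nat.finite_of_card_ne_zero (by simp [hcard, (Fact.out : p.Prime).ne_zero])
  have hclasses : (p * Nat.card (ConjClasses H) + p : ℤ) = p ^ 5 + p ^ 2 := by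
    exact_mod_cast hcard ▸
      (IsPGroup.of_card hcard).card_conjClasses_of_commutator_le_center hextra.le hcenter
  rw [Nat.card_conjClasses_prod, Nat.card_conjClasses_of_commGroup,
    Nat.card_congr Multiplicative.toAdd, Nat.card_zmod]
  push_cast
  linear_combination hclasses

/-- The direct product of the extraspecial group of order p^5 and exponent p with a
cyclic group of order p has exactly p^5 + p^2 - p conjugacy classes. -/
theorem stmt_17 (p : ℕ) [Fact p.Prime] (hp : Odd p)
    (H : Type*) [Group H]
    (hcard : Nat.card H = p ^ 5)
    (hexp : Monoid.exponent H = p)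
    (hextra : commutator H = Subgroup.center H)
    (hcenter : Nat.card (Subgroup.center H) = p) :
    (Nat.card (ConjClasses (H × Multiplicative (ZMod p))) : ℤ) = p ^ 5 + p ^ 2 - p :=
  stmt_17_general p H hcard hextra hcenter
end

section
/- For an odd prime p, the number of pairs of vectors (v,w) in GF(p)^4 × GF(p)^4 such that v ≠ 0 and w is not in the 2-dimensional span of v and σ(v), where σ(α,β,γ,δ) = (ωδ, -ωγ, -β, α) for a fixed nonsquare ω, equals (p^4-1)(p^4-p^2); in particular v and σ(v) are always linearly independent for v ≠ 0. -/
/-!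
The map σ squares to ω. Hence if σ v = a v for some v ≠ 0 then ω v = a² v, so ω = a² would be a
square; thus v and σ v are independent and span a plane of p² vectors. Each of the p⁴ - 1 nonzero
v then leaves exactly p⁴ - p² choices of w.
-/

open Submodule

section

variable {K V : Type*} [Field K] [AddCommGroup V] [Module K V]

theorem linearIndependent_pair_apply_of_apply_apply_eq_smul {ω : K} (hω : ¬ IsSquare ω)
    (f : Module.End K V) (hf : ∀ v, f (f v) = ω • v) {v : V} (hv : v ≠ 0) :
    LinearIndependent K ![v, f v] := by
  refine (LinearIndependent.pair_iff' hv).2 fun a hav => hω ⟨a, ?_⟩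
  have : (a * a - ω) • v = 0 := by
    rw [sub_smul, mul_smul, hav, ← map_smul, hav, hf, sub_self]
  exact (sub_eq_zero.mp ((smul_eq_zero.mp this).resolve_right hv)).symm

theorem natCard_span_range_of_linearIndependent {ι : Type*} [Fintype ι] {b : ι → V}
    (hb : LinearIndependent K b) :
    Nat.card (span K (Set.range b)) = Nat.card K ^ Fintype.card ι := by
  rw [Nat.card_congr (Module.Basis.span hb).equivFun.toEquiv, Nat.card_fun,
    Nat.card_eq_fintype_card (α := ι)]

end

theorem Nat.card_subtype_notMem {β : Type*} [Finite β] (s : Set β) :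
    Nat.card {b // b ∉ s} = Nat.card β - Nat.card s := by
  rw [Nat.card_coe_set_eq, ← Set.ncard_compl, ← Nat.card_coe_set_eq]
  rfl

theorem Nat.card_prod_subtype_notMem_of_card_eq {α β : Type*} [Finite α] [Finite β]
    (P : α → Prop) (S : α → Set β) {m : ℕ} (hS : ∀ a, P a → Nat.card (S a) = m) :
    Nat.card {x : α × β // P x.1 ∧ x.2 ∉ S x.1} = Nat.card {a // P a} * (Nat.card β - m) := by
  have : Fintype {a // P a} := Fintype.ofFinite _
  let e : {x : α × β // P x.1 ∧ x.2 ∉ S x.1} ≃ Σ a : {a // P a}, {b // b ∉ S a} :=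
    { toFun := fun x => ⟨⟨x.1.1, x.2.1⟩, x.1.2, x.2.2⟩
      invFun := fun x => ⟨(x.1.1, x.2.1), x.1.2, x.2.2⟩
      left_inv := fun _ => rfl
      right_inv := fun _ => rfl }
  rw [Nat.card_congr e, Nat.card_sigma, Nat.card_eq_fintype_card (α := {a // P a}), ← smul_eq_mul,
    ← Finset.card_univ, ← Finset.sum_const]
  exact Finset.sum_congr rfl fun a _ => by rw [Nat.card_subtype_notMem, hS a a.2]

section

variable {K : Type*} [Field K]

def sigmaEnd (ω : K) : Module.End K (Fin 4 → K) where
  toFun v := ![ω * v 3, -(ω * v 2), -(v 1), v 0]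
  map_add' v w := by ext i; fin_cases i <;> simp <;> ring
  map_smul' c v := by ext i; fin_cases i <;> simp <;> ring

theorem sigmaEnd_sigmaEnd (ω : K) (v : Fin 4 → K) : sigmaEnd ω (sigmaEnd ω v) = ω • v := by
  ext i; fin_cases i <;> simp [sigmaEnd]

end

theorem stmt_19_general (p : ℕ) [Fact p.Prime]
    (ω : ZMod p) (hω : ¬ IsSquare ω)
    (σ : (Fin 4 → ZMod p) → (Fin 4 → ZMod p))
    (hσ : ∀ v, σ v = ![ω * v 3, -(ω * v 2), -(v 1), v 0]) :
    (∀ v : Fin 4 → ZMod p, v ≠ 0 → LinearIndependent (ZMod p) ![v, σ v]) ∧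
    (Nat.card {vw : (Fin 4 → ZMod p) × (Fin 4 → ZMod p) //
        vw.1 ≠ 0 ∧ vw.2 ∉ Submodule.span (ZMod p) {vw.1, σ vw.1}} : ℤ) =
      (p ^ 4 - 1) * (p ^ 4 - p ^ 2) := by
  obtain rfl : σ = sigmaEnd ω := funext hσ
  have hindep : ∀ v : Fin 4 → ZMod p, v ≠ 0 → LinearIndependent (ZMod p) ![v, sigmaEnd ω v] :=
    fun v => linearIndependent_pair_apply_of_apply_apply_eq_smul hω _ (sigmaEnd_sigmaEnd ω)
  have hspan (v : Fin 4 → ZMod p) (hv : v ≠ 0) :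
      Nat.card (span (ZMod p) {v, sigmaEnd ω v}) = p ^ 2 := by
    rw [← Matrix.range_cons_cons_empty v (sigmaEnd ω v) ![],
      natCard_span_range_of_linearIndependent (hindep v hv), Nat.card_zmod, Fintype.card_fin]
  have hV : Nat.card (Fin 4 → ZMod p) = p ^ 4 := by simp
  have hnonzero : Nat.card {v : Fin 4 → ZMod p // v ≠ 0} = p ^ 4 - 1 := by simp
  refine ⟨hindep, ?_⟩
  simp only [← SetLike.mem_coe]
  rw [Nat.card_prod_subtype_notMem_of_card_eq (fun v => v ≠ 0) _ hspan, hnonzero, hV]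
  have hp : 0 < p := (Fact.out : p.Prime).pos
  push_cast [Nat.cast_sub (Nat.one_le_pow 4 p hp),
    Nat.cast_sub (Nat.pow_le_pow_right hp (by norm_num : 2 ≤ 4))]
  ring

/-- For σ(α,β,γ,δ) = (ωδ,-ωγ,-β,α) with ω a nonsquare mod p: for every v ≠ 0 the
vectors v and σ(v) are linearly independent, and the number of pairs (v,w) with
v ≠ 0 and w outside the span of v and σ(v) is (p^4-1)(p^4-p^2). -/
theorem stmt_19 (p : ℕ) [Fact p.Prime] (hp : Odd p)
    (ω : ZMod p) (hω : ¬ IsSquare ω)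
    (σ : (Fin 4 → ZMod p) → (Fin 4 → ZMod p))
    (hσ : ∀ v, σ v = ![ω * v 3, -(ω * v 2), -(v 1), v 0]) :
    (∀ v : Fin 4 → ZMod p, v ≠ 0 → LinearIndependent (ZMod p) ![v, σ v]) ∧
    (Nat.card {vw : (Fin 4 → ZMod p) × (Fin 4 → ZMod p) //
        vw.1 ≠ 0 ∧ vw.2 ∉ Submodule.span (ZMod p) {vw.1, σ vw.1}} : ℤ) =
      (p ^ 4 - 1) * (p ^ 4 - p ^ 2) :=
  stmt_19_general p ω hω σ hσ
end
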